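/- arXiv:2511.03474 — 3 statements merged into one kernel-verified Lean document; each statement's English description precedes it below -/
import Mathlib

section
/- Let K be a nonnegative measurable kernel on ℝ₊ satisfying 0 ≤ K(t) ≤ C e^{bt} t^{a−1} for some a, b, C > 0. Then for every n ≥ 1 and t ≥ 0, the n-fold convolution satisfies (1 * K^{*n})(t) ≤ C^n e^{bt} Γ(a)^n t^{an} / Γ(an+1), where 1 denotes the constant function equal to 1 and K^{*n} is the n-fold convolution of K with itself. -/
open Real MeasureTheory

/-- Volterra convolution on `ℝ₊`: `(f ⋆ g)(t) = ∫₀^t f(t-s) g(s) ds`. -/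
noncomputable def volConv (f g : ℝ → ℝ) : ℝ → ℝ :=
  fun t => ∫ s in (0:ℝ)..t, f (t - s) * g s

/-- `n`-fold Volterra convolution of `K` with itself: `K^{*1} = K`,
`K^{*(n+1)} = K ⋆ K^{*n}`. -/
noncomputable def iterConv (K : ℝ → ℝ) : ℕ → (ℝ → ℝ)
  | 0 => K
  | n + 1 => volConv K (iterConv K n)

lemma beta_integrable {u v t : ℝ} (hu : 0 < u) (hv : 0 < v) (ht : 0 < t) :
    IntervalIntegrable (fun s => (t - s) ^ (u - 1) * s ^ (v - 1)) MeasureTheory.volume 0 t := by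
  have h1 : IntervalIntegrable (fun s => (t - s) ^ (u - 1) * s ^ (v - 1))
      MeasureTheory.volume 0 (t / 2) := by
    have hint : IntervalIntegrable (fun s : ℝ => s ^ (v - 1)) MeasureTheory.volume 0 (t / 2) :=
      intervalIntegral.intervalIntegrable_rpow' (by linarith)
    have hcont : ContinuousOn (fun s : ℝ => (t - s) ^ (u - 1)) (Set.uIcc 0 (t / 2)) := by
      apply ContinuousOn.rpow_const ((continuous_const.sub continuous_id).continuousOn)
      intro x hx
      rw [Set.uIcc_of_le (by linarith)] at hx
      left
      simp only [Pi.sub_apply, id]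
      have := hx.2
      intro h; linarith
    exact hint.continuousOn_mul hcont
  have h2 : IntervalIntegrable (fun s => (t - s) ^ (u - 1) * s ^ (v - 1))
      MeasureTheory.volume (t / 2) t := by
    have hint : IntervalIntegrable (fun s : ℝ => s ^ (u - 1)) MeasureTheory.volume 0 (t / 2) :=
      intervalIntegral.intervalIntegrable_rpow' (by linarith)
    have hint2 := hint.comp_sub_left t
    rw [sub_zero, (by ring : t - t / 2 = t / 2)] at hint2
    have hint3 : IntervalIntegrable (fun s : ℝ => (t - s) ^ (u - 1))
        MeasureTheory.volume (t / 2) t := hint2.symm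
    have hcont : ContinuousOn (fun s : ℝ => s ^ (v - 1)) (Set.uIcc (t / 2) t) := by
      apply ContinuousOn.rpow_const continuousOn_id
      intro x hx
      rw [Set.uIcc_of_le (by linarith)] at hx
      left
      simp only [id]
      have := hx.1
      intro h; linarith
    exact hint3.mul_continuousOn hcont
  exact h1.trans h2

lemma beta_eval {u v t : ℝ} (hu : 0 < u) (hv : 0 < v) (ht : 0 < t) :
    ∫ s in (0:ℝ)..t, (t - s) ^ (u - 1) * s ^ (v - 1)
      = Real.Gamma u * Real.Gamma v / Real.Gamma (u + v) * t ^ (u + v - 1) := by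
  have key := Complex.betaIntegral_scaled (v : ℂ) (u : ℂ) ht
  have hco : (∫ x in (0:ℝ)..t, (x : ℂ) ^ ((v : ℂ) - 1) * ((t : ℂ) - x) ^ ((u : ℂ) - 1))
      = ((∫ s in (0:ℝ)..t, (t - s) ^ (u - 1) * s ^ (v - 1) : ℝ) : ℂ) := by
    rw [← intervalIntegral.integral_ofReal]
    apply intervalIntegral.integral_congr
    intro x hx
    rw [Set.uIcc_of_le (le_of_lt ht)] at hx
    have hx0 : (0:ℝ) ≤ x := hx.1
    have htx : (0:ℝ) ≤ t - x := by linarith [hx.2]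
    push_cast
    rw [Complex.ofReal_cpow htx, Complex.ofReal_cpow hx0]
    push_cast
    ring
  have hGamne : Real.Gamma (u + v) ≠ 0 :=
    ne_of_gt (Real.Gamma_pos_of_pos (by linarith))
  have hgg := Complex.Gamma_mul_Gamma_eq_betaIntegral (s := (v : ℂ)) (t := (u : ℂ))
    (by simpa using hv) (by simpa using hu)
  have hGC : Complex.Gamma ((v : ℂ) + u) = ((Real.Gamma (u + v) : ℝ) : ℂ) := by
    rw [show ((v:ℂ) + u) = ((v + u : ℝ) : ℂ) by push_cast; ring, Complex.Gamma_ofReal,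
      add_comm v u]
  have hbeta : Complex.betaIntegral (v : ℂ) (u : ℂ)
      = ((Real.Gamma u * Real.Gamma v / Real.Gamma (u + v) : ℝ) : ℂ) := by
    have hne : Complex.Gamma ((v : ℂ) + u) ≠ 0 := by
      rw [hGC]; exact_mod_cast hGamne
    have h1 : Complex.betaIntegral (v : ℂ) (u : ℂ)
        = Complex.Gamma v * Complex.Gamma u / Complex.Gamma ((v : ℂ) + u) := by
      rw [eq_div_iff hne, mul_comm, ← hgg]
    rw [h1, Complex.Gamma_ofReal, Complex.Gamma_ofReal, hGC]
    push_cast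
    ring
  rw [hco, hbeta] at key
  have hpow : ((t : ℂ)) ^ ((v : ℂ) + (u : ℂ) - 1) = ((t ^ (u + v - 1) : ℝ) : ℂ) := by
    rw [show ((v:ℂ) + u - 1) = ((u + v - 1 : ℝ) : ℂ) by push_cast; ring,
      Complex.ofReal_cpow (le_of_lt ht)]
  rw [hpow] at key
  have := key
  rw [← Complex.ofReal_mul] at this
  have h2 : (∫ s in (0:ℝ)..t, (t - s) ^ (u - 1) * s ^ (v - 1))
      = t ^ (u + v - 1) * (Real.Gamma u * Real.Gamma v / Real.Gamma (u + v)) := by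
    exact_mod_cast this
  rw [h2]; ring

/-- If `0 ≤ K(t) ≤ C e^{bt} t^{a-1}`, then for every `n ≥ 1` and `t ≥ 0`,
`(1 * K^{*n})(t) ≤ C^n e^{bt} Γ(a)^n t^{an} / Γ(an+1)`. -/
theorem iterConv_bound (K : ℝ → ℝ) (a b C : ℝ) (ha : 0 < a) (hb : 0 < b) (hC : 0 < C)
    (hK : Measurable K)
    (hK0 : ∀ t, 0 < t → 0 ≤ K t ∧ K t ≤ C * Real.exp (b * t) * t ^ (a - 1)) :
    ∀ n : ℕ, 1 ≤ n → ∀ t : ℝ, 0 ≤ t →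
      volConv (fun _ => (1:ℝ)) (iterConv K (n - 1)) t
        ≤ C ^ n * Real.exp (b * t) * Real.Gamma a ^ n * t ^ (a * n) /
            Real.Gamma (a * n + 1) := by
  -- the pointwise inductive bound
  have main : ∀ n : ℕ, ∀ t : ℝ, 0 < t → 0 ≤ iterConv K n t ∧
      iterConv K n t ≤ C ^ (n + 1) * Real.exp (b * t) * Real.Gamma a ^ (n + 1) /
        Real.Gamma (a * (n + 1)) * t ^ (a * (n + 1) - 1) := by
    intro n
    induction n with
    | zero =>
      intro t ht
      refine ⟨(hK0 t ht).1, ?_⟩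
      have h := (hK0 t ht).2
      have hG : Real.Gamma a ≠ 0 := ne_of_gt (Real.Gamma_pos_of_pos ha)
      refine h.trans (le_of_eq ?_)
      push_cast
      simp only [zero_add, mul_one, pow_one]
      field_simp
    | succ n ih =>
      intro t ht
      have hc : 0 < a * (n + 1) := by positivity
      have hE : (0:ℝ) < C ^ (n + 1) * Real.Gamma a ^ (n + 1) / Real.Gamma (a * (n + 1)) := by
        have := Real.Gamma_pos_of_pos hc
        have := Real.Gamma_pos_of_pos ha
        positivity
      set E : ℝ := C ^ (n + 1) * Real.Gamma a ^ (n + 1) / Real.Gamma (a * (n + 1)) with hEdef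
      have hshow : iterConv K (n + 1) t = ∫ s in (0:ℝ)..t, K (t - s) * iterConv K n s := rfl
      -- the dominating function
      set g : ℝ → ℝ := fun s => (C * E * Real.exp (b * t)) * ((t - s) ^ (a - 1) *
        s ^ (a * (n + 1) - 1)) with hgdef
      have hgint : IntervalIntegrable g MeasureTheory.volume 0 t :=
        (beta_integrable ha hc ht).const_mul _
      have hbound : ∀ s ∈ Set.Ioo (0:ℝ) t, K (t - s) * iterConv K n s ≤ g s ∧
          0 ≤ K (t - s) * iterConv K n s := by
        intro s hs
        obtain ⟨hs0, hst⟩ := hs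
        have hts : 0 < t - s := by linarith
        obtain ⟨hKnn, hKle⟩ := hK0 (t - s) hts
        obtain ⟨hInn, hIle⟩ := ih s hs0
        constructor
        · have step1 : K (t - s) * iterConv K n s
              ≤ (C * Real.exp (b * (t - s)) * (t - s) ^ (a - 1)) *
                (C ^ (n + 1) * Real.exp (b * s) * Real.Gamma a ^ (n + 1) /
                  Real.Gamma (a * (n + 1)) * s ^ (a * (n + 1) - 1)) := by
            apply mul_le_mul hKle hIle hInn
            positivity
          have step2 : (C * Real.exp (b * (t - s)) * (t - s) ^ (a - 1)) *
                (C ^ (n + 1) * Real.exp (b * s) * Real.Gamma a ^ (n + 1) /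
                  Real.Gamma (a * (n + 1)) * s ^ (a * (n + 1) - 1)) = g s := by
            simp only [hgdef, hEdef]
            rw [show b * (t - s) = b * t - b * s by ring, Real.exp_sub]
            have hGa : Real.Gamma (a * ((n:ℝ) + 1)) ≠ 0 :=
              ne_of_gt (Real.Gamma_pos_of_pos hc)
            field_simp
          exact step1.trans (le_of_eq step2)
        · exact mul_nonneg hKnn hInn
      -- nonnegativity
      have hIoo : iterConv K (n + 1) t = ∫ s in Set.Ioo (0:ℝ) t, K (t - s) * iterConv K n s := by
        rw [hshow, intervalIntegral.integral_of_le (le_of_lt ht),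
          MeasureTheory.integral_Ioc_eq_integral_Ioo]
      have hnn : 0 ≤ iterConv K (n + 1) t := by
        rw [hIoo]
        apply MeasureTheory.setIntegral_nonneg measurableSet_Ioo
        intro s hs
        exact (hbound s hs).2
      refine ⟨hnn, ?_⟩
      -- compare with the dominating integral
      have hgIoo : IntegrableOn g (Set.Ioo 0 t) MeasureTheory.volume := by
        have := (intervalIntegrable_iff_integrableOn_Ioc_of_le (le_of_lt ht)).mp hgint
        exact this.mono_set Set.Ioo_subset_Ioc_self
      have hle : iterConv K (n + 1) t ≤ ∫ s in Set.Ioo (0:ℝ) t, g s := by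
        rw [hIoo]
        apply MeasureTheory.integral_mono_of_nonneg
        · filter_upwards [MeasureTheory.ae_restrict_mem measurableSet_Ioo] with s hs
          exact (hbound s hs).2
        · exact hgIoo
        · filter_upwards [MeasureTheory.ae_restrict_mem measurableSet_Ioo] with s hs
          exact (hbound s hs).1
      have hgval : ∫ s in Set.Ioo (0:ℝ) t, g s
          = (C * E * Real.exp (b * t)) *
            (Real.Gamma a * Real.Gamma (a * (n + 1)) / Real.Gamma (a + a * (n + 1)) *
              t ^ (a + a * (n + 1) - 1)) := by
        rw [← MeasureTheory.integral_Ioc_eq_integral_Ioo,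
          ← intervalIntegral.integral_of_le (le_of_lt ht)]
        rw [hgdef]
        rw [intervalIntegral.integral_const_mul]
        rw [beta_eval ha hc ht]
      rw [hgval] at hle
      refine hle.trans (le_of_eq ?_)
      have hGa : Real.Gamma (a * (n + 1)) ≠ 0 := ne_of_gt (Real.Gamma_pos_of_pos hc)
      have heq1 : a + a * ((n:ℝ) + 1) = a * ((n:ℝ) + 1 + 1) := by ring
      rw [hEdef]
      push_cast
      rw [heq1]
      field_simp
      ring
  -- now the final integration step
  intro n hn t ht
  rcases Nat.exists_eq_add_of_le hn with ⟨m, hm⟩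
  have hnm : n - 1 = m := by omega
  have hnn : (n : ℝ) = (m : ℝ) + 1 := by rw [hm]; push_cast; ring
  rcases eq_or_lt_of_le ht with h0 | htpos
  · -- t = 0
    rw [← h0]
    unfold volConv
    rw [intervalIntegral.integral_same]
    have : (0:ℝ) ^ (a * n) = 0 := by
      rw [Real.zero_rpow]; positivity
    rw [this]
    simp
  · -- t > 0
    have hc : 0 < a * (m + 1) := by positivity
    have hGpos : 0 < Real.Gamma (a * ((m:ℝ) + 1)) := Real.Gamma_pos_of_pos hc
    have hGa : 0 < Real.Gamma a := Real.Gamma_pos_of_pos ha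
    set E : ℝ := C ^ (m + 1) * Real.Gamma a ^ (m + 1) / Real.Gamma (a * ((m:ℝ) + 1)) with hEdef
    have hEpos : 0 < E := by positivity
    have hshow : volConv (fun _ => (1:ℝ)) (iterConv K (n - 1)) t
        = ∫ s in Set.Ioo (0:ℝ) t, iterConv K m s := by
      unfold volConv
      rw [hnm, intervalIntegral.integral_of_le ht, MeasureTheory.integral_Ioc_eq_integral_Ioo]
      simp
    set g : ℝ → ℝ := fun s => (E * Real.exp (b * t)) * s ^ (a * ((m:ℝ) + 1) - 1) with hgdef
    have hgint : IntervalIntegrable g MeasureTheory.volume 0 t :=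
      (intervalIntegral.intervalIntegrable_rpow' (by linarith)).const_mul _
    have hgIoo : IntegrableOn g (Set.Ioo 0 t) MeasureTheory.volume := by
      have := (intervalIntegrable_iff_integrableOn_Ioc_of_le ht).mp hgint
      exact this.mono_set Set.Ioo_subset_Ioc_self
    have hbound : ∀ s ∈ Set.Ioo (0:ℝ) t, iterConv K m s ≤ g s ∧ 0 ≤ iterConv K m s := by
      intro s hs
      obtain ⟨hs0, hst⟩ := hs
      obtain ⟨hInn, hIle⟩ := main m s hs0
      refine ⟨?_, hInn⟩
      refine hIle.trans ?_
      rw [hgdef]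
      have hsp : (0:ℝ) ≤ s ^ (a * ((m:ℝ) + 1) - 1) := Real.rpow_nonneg (le_of_lt hs0) _
      have hexp : Real.exp (b * s) ≤ Real.exp (b * t) := by
        apply Real.exp_le_exp.mpr
        nlinarith
      have h1 : C ^ (m + 1) * Real.exp (b * s) * Real.Gamma a ^ (m + 1) /
          Real.Gamma (a * ((m:ℝ) + 1)) ≤ E * Real.exp (b * t) := by
        rw [hEdef]
        rw [div_mul_eq_mul_div, div_le_div_iff₀ hGpos hGpos]
        have hCp : (0:ℝ) < C ^ (m + 1) := by positivity
        have hGp : (0:ℝ) < Real.Gamma a ^ (m + 1) := by positivity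
        nlinarith [mul_le_mul_of_nonneg_left hexp
          (le_of_lt (mul_pos (mul_pos hCp hGp) hGpos))]
      push_cast
      exact mul_le_mul_of_nonneg_right h1 hsp
    have hle : volConv (fun _ => (1:ℝ)) (iterConv K (n - 1)) t ≤ ∫ s in Set.Ioo (0:ℝ) t, g s := by
      rw [hshow]
      apply MeasureTheory.integral_mono_of_nonneg
      · filter_upwards [MeasureTheory.ae_restrict_mem measurableSet_Ioo] with s hs
        exact (hbound s hs).2
      · exact hgIoo
      · filter_upwards [MeasureTheory.ae_restrict_mem measurableSet_Ioo] with s hs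
        exact (hbound s hs).1
    have hgval : ∫ s in Set.Ioo (0:ℝ) t, g s
        = (E * Real.exp (b * t)) * (t ^ (a * ((m:ℝ) + 1)) / (a * ((m:ℝ) + 1))) := by
      rw [← MeasureTheory.integral_Ioc_eq_integral_Ioo,
        ← intervalIntegral.integral_of_le ht, hgdef,
        intervalIntegral.integral_const_mul, integral_rpow (Or.inl (by linarith))]
      rw [sub_add_cancel]
      have : (0:ℝ) ^ (a * ((m:ℝ) + 1)) = 0 := by
        rw [Real.zero_rpow]; positivity
      rw [this, sub_zero]
    rw [hgval] at hle
    refine hle.trans (le_of_eq ?_)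
    have hGrec : Real.Gamma (a * (n:ℝ) + 1) = a * (n:ℝ) * Real.Gamma (a * (n:ℝ)) := by
      rw [Real.Gamma_add_one]
      positivity
    have hm1 : m + 1 = n := by omega
    rw [hGrec, hEdef, hnn, ← hm1]
    push_cast
    field_simp
end

section
/- Let g, h : ℝ₊ → ℝ be locally bounded Borel functions, K ∈ L¹_loc(ℝ₊), λ ∈ ℝ, and assume the λ-resolvent R_λ of K (satisfying R_λ + λK*R_λ = 1, R_λ(0)=1) is differentiable with R_λ′ ∈ L¹_loc. If x(t) = g(t) − λ∫₀^t K(t−s)x(s)ds for all t ≥ 0, then x(t) = g(t) + ∫₀^t R_λ′(t−s)g(s)ds for all t ≥ 0. -/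
open Real MeasureTheory Set Filter

set_option maxHeartbeats 3000000

namespace WHaux

/-- pull back an a.e. property on `Ioi 0` through `s ↦ t - s`. -/
lemma ae_reflect {p : ℝ → Prop} (t : ℝ)
    (hp : ∀ᵐ w ∂(volume.restrict (Set.Ioi (0:ℝ))), p w) :
    ∀ᵐ s ∂(volume.restrict (Set.Ioc (0:ℝ) t)), p (t - s) := by
  rw [ae_restrict_iff' measurableSet_Ioi] at hp
  rw [ae_restrict_iff' measurableSet_Ioc]
  have hmp : MeasurePreserving (fun s : ℝ => t - s) volume volume :=
    Measure.measurePreserving_sub_left volume t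
  have h2 : ∀ᵐ s : ℝ, t - s ∈ Set.Ioi (0:ℝ) → p (t - s) :=
    hmp.quasiMeasurePreserving.tendsto_ae.eventually hp
  have h3 : ∀ᵐ s : ℝ, s ≠ t := by
    rw [ae_iff]
    have : {s : ℝ | ¬ s ≠ t} = {t} := by ext s; simp
    rw [this]; exact measure_singleton t
  filter_upwards [h2, h3] with s hs2 hs3 hmem
  exact hs2 (by simp only [Set.mem_Ioi]; have := hmem.2; have : s < t := lt_of_le_of_ne this hs3; linarith)

/-- reflection of integrability -/
lemma refl_intOn {G : ℝ → ℝ} {u t : ℝ} (hu0 : 0 ≤ u) (hut : u ≤ t)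
    (hG : IntegrableOn G (Set.Ioc 0 t)) :
    IntegrableOn (fun s => G (u - s)) (Set.Ioc 0 u) := by
  have h1 : IntegrableOn G (Set.Ioc 0 u) := hG.mono_set (Set.Ioc_subset_Ioc_right hut)
  have h2 : IntervalIntegrable G volume 0 u := by
    rw [intervalIntegrable_iff_integrableOn_Ioc_of_le hu0]; exact h1
  have h3 := (h2.comp_sub_left u).symm
  simp only [sub_zero, sub_self] at h3
  rw [intervalIntegrable_iff_integrableOn_Ioc_of_le hu0] at h3
  exact h3

/-- reflection of integrals -/
lemma refl_integral (G : ℝ → ℝ) {u : ℝ} (hu : 0 ≤ u) :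
    ∫ s in Set.Ioc 0 u, G (u - s) = ∫ s in Set.Ioc 0 u, G s := by
  rw [← intervalIntegral.integral_of_le hu, ← intervalIntegral.integral_of_le hu]
  simpa using intervalIntegral.integral_comp_sub_left G u


lemma ae_zero_of_int {φ : ℝ → ℝ} (hm : Measurable φ)
    (hint : ∀ T : ℝ, 0 < T → IntegrableOn φ (Set.Ioc 0 T))
    (hz : ∀ t : ℝ, 0 ≤ t → ∫ s in Set.Ioc (0:ℝ) t, φ s = 0) :
    ∀ᵐ s ∂(volume.restrict (Set.Ioi (0:ℝ))), φ s = 0 := by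
  set fE : ℝ → ℝ := (Set.Ioi (0:ℝ)).indicator φ with hfE
  have hfEm : Measurable fE := hm.indicator measurableSet_Ioi
  -- fE is integrable on any Ioc
  have key : ∀ a b : ℝ, IntegrableOn fE (Set.Ioc a b) := by
    intro a b
    rcases le_or_gt b 0 with hb | hb
    · refine (integrableOn_congr_fun (fun y hy => ?_) measurableSet_Ioc).1
        (integrableOn_zero (s := Set.Ioc a b))
      have : y ∉ Set.Ioi (0:ℝ) := by
        simp only [Set.mem_Ioi, not_lt]; exact le_trans hy.2 hb
      exact (Set.indicator_of_notMem this φ).symm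
    · have h1 : IntegrableOn fE (Set.Ioc 0 b) :=
        (hint b hb).congr_fun
          (fun y hy => (Set.indicator_of_mem (Set.mem_Ioi.2 hy.1) φ).symm) measurableSet_Ioc
      have h2 : IntegrableOn fE (Set.Ioc a 0) := by
        refine (integrableOn_congr_fun (fun y hy => ?_) measurableSet_Ioc).1
          (integrableOn_zero (s := Set.Ioc a 0))
        have : y ∉ Set.Ioi (0:ℝ) := by
          simp only [Set.mem_Ioi, not_lt]; exact hy.2
        exact (Set.indicator_of_notMem this φ).symm
      refine (h2.union h1).mono_set ?_
      intro y hy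
      rcases le_or_gt y 0 with h | h
      · exact Or.inl ⟨hy.1, h⟩
      · exact Or.inr ⟨h, hy.2⟩
  have hloc : LocallyIntegrable fE volume := by
    intro x
    refine ⟨Metric.ball x 1, Metric.ball_mem_nhds x one_pos, ?_⟩
    have hsub : Metric.ball x 1 ⊆ Set.Ioc (x - 1) (x + 1) := by
      intro y hy
      rw [Real.ball_eq_Ioo] at hy
      exact ⟨hy.1, le_of_lt hy.2⟩
    exact (key (x-1) (x+1)).mono_set hsub
  have hC := IsUnifLocDoublingMeasure.ae_tendsto_average (μ := volume) hloc 1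
  rw [ae_restrict_iff' measurableSet_Ioi]
  filter_upwards [hC] with x hx hxpos
  have hxpos' : (0:ℝ) < x := hxpos
  have h1 : Tendsto (fun δ : ℝ => ⨍ y in Metric.closedBall x δ, fE y)
      (nhdsWithin 0 (Set.Ioi 0)) (nhds (fE x)) := by
    refine hx (fun _ => x) id tendsto_id ?_
    filter_upwards [self_mem_nhdsWithin] with δ hδ
    simp only [Set.mem_Ioi] at hδ
    exact Metric.mem_closedBall_self (by simp only [id_eq, one_mul]; linarith)
  have h2 : ∀ᶠ δ in nhdsWithin (0:ℝ) (Set.Ioi 0),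
      (⨍ y in Metric.closedBall x δ, fE y) = 0 := by
    have hmem : Set.Ioo (0:ℝ) x ∈ nhdsWithin (0:ℝ) (Set.Ioi 0) := by
      refine mem_nhdsWithin.2 ⟨Set.Iio x, isOpen_Iio, hxpos', ?_⟩
      intro y hy; exact ⟨hy.2, hy.1⟩
    filter_upwards [hmem] with δ hδ
    have hδ0 : 0 < δ := hδ.1
    have hδx : δ < x := hδ.2
    have hIoc : ∫ y in Metric.closedBall x δ, fE y = ∫ y in Set.Ioc (x-δ) (x+δ), fE y := by
      rw [Real.closedBall_eq_Icc, MeasureTheory.integral_Icc_eq_integral_Ioc]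
    have hzE : ∀ t : ℝ, 0 ≤ t → ∫ y in Set.Ioc (0:ℝ) t, fE y = 0 := by
      intro t ht
      rw [MeasureTheory.setIntegral_congr_fun measurableSet_Ioc
        (fun y hy => Set.indicator_of_mem (Set.mem_Ioi.2 hy.1) φ)]
      exact hz t ht
    have hsplit : ∫ y in Set.Ioc (0:ℝ) (x+δ), fE y
        = (∫ y in Set.Ioc (0:ℝ) (x-δ), fE y) + ∫ y in Set.Ioc (x-δ) (x+δ), fE y := by
      rw [← MeasureTheory.setIntegral_union (Set.Ioc_disjoint_Ioc_of_le le_rfl) measurableSet_Ioc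
        (key 0 (x-δ)) (key (x-δ) (x+δ))]
      rw [Set.Ioc_union_Ioc_eq_Ioc (by linarith) (by linarith)]
    have hz1 := hzE (x+δ) (by linarith)
    have hz2 := hzE (x-δ) (by linarith)
    have hball : ∫ y in Set.Ioc (x-δ) (x+δ), fE y = 0 := by
      rw [hz1, hz2] at hsplit; linarith
    rw [MeasureTheory.setAverage_eq, hIoc, hball]
    simp
  have h2' : (fun δ => ⨍ y in Metric.closedBall x δ, fE y)
      =ᶠ[nhdsWithin (0:ℝ) (Set.Ioi 0)] (fun _ => (0:ℝ)) := h2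
  have hlim := tendsto_nhds_unique h1 (Tendsto.congr' h2'.symm tendsto_const_nhds)
  have hfx : fE x = φ x := Set.indicator_of_mem (Set.mem_Ioi.2 hxpos') φ
  rw [hfx] at hlim
  exact hlim

/-- The key Fubini identity for iterated convolutions on `[0, t]`:
`∫₀ᵗ F(t-u) (G*H)(u) du = ∫₀ᵗ (G⋆F)(t-s) H(s) ds`. -/
lemma fub (t : ℝ) (ht : 0 ≤ t) (F G H : ℝ → ℝ)
    (hFm : Measurable F) (hGm : Measurable G) (hHm : Measurable H)
    (hF : IntegrableOn F (Set.Ioc 0 t)) (hG : IntegrableOn G (Set.Ioc 0 t))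
    (M : ℝ) (hH : ∀ s ∈ Set.Ioc (0:ℝ) t, |H s| ≤ M) :
    ∫ u in Set.Ioc (0:ℝ) t, F (t-u) * ∫ s in Set.Ioc (0:ℝ) u, G (u-s) * H s
      = ∫ s in Set.Ioc (0:ℝ) t, (∫ v in Set.Ioc (0:ℝ) (t-s), G ((t-s)-v) * F v) * H s := by
  classical
  set M' : ℝ := max M 0 with hM'
  have hHM' : ∀ s ∈ Set.Ioc (0:ℝ) t, |H s| ≤ M' := fun s hs => le_trans (hH s hs) (le_max_left _ _)
  set Φ : ℝ → ℝ → ℝ := fun u s =>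
    if 0 < s ∧ s < u ∧ u ≤ t then F (t-u) * (G (u-s) * H s) else 0 with hΦ
  have hT : MeasurableSet {p : ℝ × ℝ | 0 < p.2 ∧ p.2 < p.1 ∧ p.1 ≤ t} := by
    apply MeasurableSet.inter
    · exact measurableSet_lt measurable_const measurable_snd
    · exact (measurableSet_lt measurable_snd measurable_fst).inter
        (measurableSet_le measurable_fst measurable_const)
  have hΦm : Measurable (Function.uncurry Φ) := by
    have : Function.uncurry Φ = fun p : ℝ × ℝ =>
        if (0 < p.2 ∧ p.2 < p.1 ∧ p.1 ≤ t) then F (t-p.1) * (G (p.1-p.2) * H p.2) else 0 := rfl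
    rw [this]
    refine Measurable.ite hT ?_ measurable_const
    exact (hFm.comp (measurable_const.sub measurable_fst)).mul
      ((hGm.comp (measurable_fst.sub measurable_snd)).mul (hHm.comp measurable_snd))
  -- sections in s
  have hsec : ∀ u : ℝ, Integrable (Φ u) volume := by
    intro u
    by_cases hu : 0 < u ∧ u ≤ t
    · have hind : Φ u = (Set.Ioo (0:ℝ) u).indicator (fun s => F (t-u) * (G (u-s) * H s)) := by
        funext s
        by_cases hs : s ∈ Set.Ioo (0:ℝ) u
        · rw [Set.indicator_of_mem hs, hΦ]
          exact if_pos ⟨hs.1, hs.2, hu.2⟩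
        · rw [Set.indicator_of_notMem hs, hΦ]
          refine if_neg ?_
          rintro ⟨h1, h2, _⟩; exact hs ⟨h1, h2⟩
      rw [hind, integrable_indicator_iff measurableSet_Ioo]
      -- integrable on Ioo 0 u
      have hGint : IntegrableOn (fun s => G (u - s)) (Set.Ioo 0 u) :=
        (refl_intOn (le_of_lt hu.1) hu.2 hG).mono_set Set.Ioo_subset_Ioc_self
      have hH' : ∀ᵐ s ∂(volume.restrict (Set.Ioo (0:ℝ) u)), ‖H s‖ ≤ M' := by
        rw [ae_restrict_iff' measurableSet_Ioo]
        filter_upwards with s hs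
        exact hHM' s ⟨hs.1, le_trans (le_of_lt hs.2) hu.2⟩
      have h1 : Integrable (fun s => H s * G (u - s)) (volume.restrict (Set.Ioo 0 u)) :=
        hGint.bdd_mul (hHm.aestronglyMeasurable.restrict) hH'
      have h2 : Integrable (fun s => F (t-u) * (G (u-s) * H s)) (volume.restrict (Set.Ioo 0 u)) := by
        have := h1.const_mul (F (t-u))
        refine this.congr (Filter.Eventually.of_forall fun s => ?_)
        ring
      exact h2
    · have : Φ u = fun _ => 0 := by
        funext s; rw [hΦ]
        refine if_neg ?_
        rintro ⟨h1, h2, h3⟩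
        exact hu ⟨lt_trans h1 h2, h3⟩
      rw [this]; exact integrable_zero _ _ _
  -- integrability of the double function
  have hGnorm : IntegrableOn (fun s => |G s|) (Set.Ioc 0 t) := hG.norm
  set C : ℝ := M' * ∫ s in Set.Ioc (0:ℝ) t, |G s| with hC
  have hC0 : 0 ≤ C := by
    apply mul_nonneg (le_max_right _ _)
    exact setIntegral_nonneg measurableSet_Ioc (fun s _ => abs_nonneg _)
  have hInt : Integrable (Function.uncurry Φ) (volume.prod volume) := by
    rw [MeasureTheory.integrable_prod_iff hΦm.aestronglyMeasurable]
    constructor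
    · exact Filter.Eventually.of_forall hsec
    · -- bound the norm integrals
      set bound : ℝ → ℝ := (Set.Ioc (0:ℝ) t).indicator (fun u => |F (t-u)| * C) with hbound
      have hboundint : Integrable bound volume := by
        rw [hbound, integrable_indicator_iff measurableSet_Ioc]
        exact ((refl_intOn ht le_rfl hF).norm.mul_const C)
      refine Integrable.mono' hboundint ?_ ?_
      · exact (hΦm.norm.stronglyMeasurable.integral_prod_right').aestronglyMeasurable
      refine Filter.Eventually.of_forall (fun u => ?_)
      simp only [Function.uncurry_apply_pair]
      by_cases hu : 0 < u ∧ u ≤ t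
      · have hval : bound u = |F (t-u)| * C := by
          rw [hbound, Set.indicator_of_mem (Set.mem_Ioc.2 hu)]
        rw [hval]
        have hnn : 0 ≤ ∫ s, ‖Φ u s‖ := integral_nonneg (fun s => norm_nonneg _)
        rw [Real.norm_eq_abs, abs_of_nonneg hnn]
        -- ∫ s, ‖Φ u s‖ = ∫ over Ioo 0 u
        have hΦval : ∀ s, Φ u s
            = (Set.Ioo (0:ℝ) u).indicator (fun s => F (t-u) * (G (u-s) * H s)) s := by
          intro s
          by_cases hs : s ∈ Set.Ioo (0:ℝ) u
          · rw [Set.indicator_of_mem hs, hΦ]; exact if_pos ⟨hs.1, hs.2, hu.2⟩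
          · rw [Set.indicator_of_notMem hs, hΦ]
            exact if_neg (by rintro ⟨h1, h2, _⟩; exact hs ⟨h1, h2⟩)
        have hind : (fun s => ‖Φ u s‖)
            = (Set.Ioo (0:ℝ) u).indicator (fun s => ‖F (t-u) * (G (u-s) * H s)‖) := by
          funext s
          rw [hΦval s, norm_indicator_eq_indicator_norm]
        rw [hind, MeasureTheory.integral_indicator measurableSet_Ioo]
        have step1 : ∫ s in Set.Ioo (0:ℝ) u, ‖F (t-u) * (G (u-s) * H s)‖
            ≤ ∫ s in Set.Ioo (0:ℝ) u, (|F (t-u)| * M') * |G (u-s)| := by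
          refine setIntegral_mono_on ?_ ?_ measurableSet_Ioo ?_
          · have : Integrable (Φ u) volume := hsec u
            have h2 := this.norm
            rw [hind] at h2
            rwa [integrable_indicator_iff measurableSet_Ioo] at h2
          · exact (((refl_intOn (le_of_lt hu.1) hu.2 hG).mono_set
              Set.Ioo_subset_Ioc_self).norm.const_mul _)
          · intro s hs
            have hHs : |H s| ≤ M' := hHM' s ⟨hs.1, le_trans (le_of_lt hs.2) hu.2⟩
            rw [Real.norm_eq_abs, abs_mul, abs_mul]
            calc |F (t-u)| * (|G (u-s)| * |H s|)
                ≤ |F (t-u)| * (|G (u-s)| * M') := by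
                  apply mul_le_mul_of_nonneg_left ?_ (abs_nonneg _)
                  exact mul_le_mul_of_nonneg_left hHs (abs_nonneg _)
              _ = (|F (t-u)| * M') * |G (u-s)| := by ring
        have step2 : ∫ s in Set.Ioo (0:ℝ) u, (|F (t-u)| * M') * |G (u-s)|
            = (|F (t-u)| * M') * ∫ s in Set.Ioo (0:ℝ) u, |G (u-s)| := by
          rw [MeasureTheory.integral_const_mul]
        have step3 : ∫ s in Set.Ioo (0:ℝ) u, |G (u-s)| ≤ ∫ s in Set.Ioc (0:ℝ) t, |G s| := by
          have e1 : ∫ s in Set.Ioo (0:ℝ) u, |G (u-s)| = ∫ s in Set.Ioc (0:ℝ) u, |G (u-s)| :=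
            (MeasureTheory.integral_Ioc_eq_integral_Ioo).symm
          have e2 : ∫ s in Set.Ioc (0:ℝ) u, |G (u-s)| = ∫ s in Set.Ioc (0:ℝ) u, |G s| :=
            refl_integral (fun w => |G w|) (le_of_lt hu.1)
          rw [e1, e2]
          refine setIntegral_mono_set hGnorm ?_ ?_
          · filter_upwards with s using abs_nonneg _
          · exact HasSubset.Subset.eventuallyLE (Set.Ioc_subset_Ioc_right hu.2)
        calc ∫ s in Set.Ioo (0:ℝ) u, ‖F (t-u) * (G (u-s) * H s)‖
            ≤ (|F (t-u)| * M') * ∫ s in Set.Ioo (0:ℝ) u, |G (u-s)| := by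
              rw [← step2]; exact step1
          _ ≤ (|F (t-u)| * M') * ∫ s in Set.Ioc (0:ℝ) t, |G s| := by
              apply mul_le_mul_of_nonneg_left step3
              exact mul_nonneg (abs_nonneg _) (le_max_right _ _)
          _ = |F (t-u)| * C := by rw [hC]; ring
      · have hzero : Φ u = fun _ => 0 := by
          funext s; rw [hΦ]
          exact if_neg (by rintro ⟨h1, h2, h3⟩; exact hu ⟨lt_trans h1 h2, h3⟩)
        have : (∫ s, ‖Φ u s‖) = 0 := by rw [hzero]; simp
        rw [this]
        have : bound u = 0 := by
          rw [hbound, Set.indicator_of_notMem (by simpa [Set.mem_Ioc] using hu)]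
        rw [this]; simp
  -- Fubini swap
  have hswap : ∫ u, ∫ s, Φ u s = ∫ s, ∫ u, Φ u s := MeasureTheory.integral_integral_swap hInt
  -- identify LHS
  have hLHS : ∫ u in Set.Ioc (0:ℝ) t, F (t-u) * ∫ s in Set.Ioc (0:ℝ) u, G (u-s) * H s
      = ∫ u, ∫ s, Φ u s := by
    have e1 : ∫ u in Set.Ioc (0:ℝ) t, F (t-u) * ∫ s in Set.Ioc (0:ℝ) u, G (u-s) * H s
        = ∫ u in Set.Ioc (0:ℝ) t, ∫ s, Φ u s := by
      refine setIntegral_congr_fun measurableSet_Ioc (fun u hu => ?_)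
      have hind : (fun s => Φ u s)
          = (Set.Ioo (0:ℝ) u).indicator (fun s => F (t-u) * (G (u-s) * H s)) := by
        funext s
        by_cases hs : s ∈ Set.Ioo (0:ℝ) u
        · rw [Set.indicator_of_mem hs, hΦ]; exact if_pos ⟨hs.1, hs.2, hu.2⟩
        · rw [Set.indicator_of_notMem hs, hΦ]
          exact if_neg (by rintro ⟨h1, h2, _⟩; exact hs ⟨h1, h2⟩)
      calc F (t-u) * ∫ s in Set.Ioc (0:ℝ) u, G (u-s) * H s
          = F (t-u) * ∫ s in Set.Ioo (0:ℝ) u, G (u-s) * H s := by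
            rw [MeasureTheory.integral_Ioc_eq_integral_Ioo]
        _ = ∫ s in Set.Ioo (0:ℝ) u, F (t-u) * (G (u-s) * H s) := by
            rw [MeasureTheory.integral_const_mul]
        _ = ∫ s, Φ u s := by
            rw [hind, MeasureTheory.integral_indicator measurableSet_Ioo]
    have e2 : ∫ u in Set.Ioc (0:ℝ) t, (∫ s, Φ u s) = ∫ u, ∫ s, Φ u s := by
      refine MeasureTheory.setIntegral_eq_integral_of_forall_compl_eq_zero (fun u hu => ?_)
      have hzero : Φ u = fun _ => 0 := by
        funext s; rw [hΦ]
        refine if_neg ?_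
        rintro ⟨h1, h2, h3⟩
        exact hu ⟨lt_trans h1 h2, h3⟩
      rw [hzero]; simp
    rw [e1, e2]
  -- identify RHS
  have hRHS : ∫ s in Set.Ioc (0:ℝ) t, (∫ v in Set.Ioc (0:ℝ) (t-s), G ((t-s)-v) * F v) * H s
      = ∫ s, ∫ u, Φ u s := by
    have e1 : ∫ s in Set.Ioc (0:ℝ) t, (∫ v in Set.Ioc (0:ℝ) (t-s), G ((t-s)-v) * F v) * H s
        = ∫ s in Set.Ioc (0:ℝ) t, ∫ u, Φ u s := by
      refine setIntegral_congr_fun measurableSet_Ioc (fun s hs => ?_)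
      have hst : s ≤ t := hs.2
      have h0s : (0:ℝ) < s := hs.1
      have hcv : ∫ v in Set.Ioc (0:ℝ) (t-s), G ((t-s)-v) * F v
          = ∫ u in Set.Ioc s t, G (u-s) * F (t-u) := by
        rw [← intervalIntegral.integral_of_le (by linarith : (0:ℝ) ≤ t - s),
            ← intervalIntegral.integral_of_le hst]
        have hkey := intervalIntegral.integral_comp_sub_left
          (a := s) (b := t) (fun v => G ((t-s)-v) * F v) t
        simp only [sub_self] at hkey
        rw [← hkey]
        apply intervalIntegral.integral_congr
        intro u _
        congr 1
        ring_nf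
      have hind : (fun u => Φ u s)
          = (Set.Ioc s t).indicator (fun u => F (t-u) * (G (u-s) * H s)) := by
        funext u
        by_cases hu : u ∈ Set.Ioc s t
        · rw [Set.indicator_of_mem hu, hΦ]; exact if_pos ⟨h0s, hu.1, hu.2⟩
        · rw [Set.indicator_of_notMem hu, hΦ]
          exact if_neg (by rintro ⟨_, h2, h3⟩; exact hu ⟨h2, h3⟩)
      calc (∫ v in Set.Ioc (0:ℝ) (t-s), G ((t-s)-v) * F v) * H s
          = (∫ u in Set.Ioc s t, G (u-s) * F (t-u)) * H s := by rw [hcv]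
        _ = ∫ u in Set.Ioc s t, G (u-s) * F (t-u) * H s := by
            rw [MeasureTheory.integral_mul_const]
        _ = ∫ u in Set.Ioc s t, F (t-u) * (G (u-s) * H s) := by
            apply setIntegral_congr_fun measurableSet_Ioc
            intro u _; ring
        _ = ∫ u, Φ u s := by
            rw [hind, MeasureTheory.integral_indicator measurableSet_Ioc]
    have e2 : ∫ s in Set.Ioc (0:ℝ) t, (∫ u, Φ u s) = ∫ s, ∫ u, Φ u s := by
      refine MeasureTheory.setIntegral_eq_integral_of_forall_compl_eq_zero (fun s hs => ?_)
      have hzero : ∀ u, Φ u s = 0 := by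
        intro u; rw [hΦ]
        refine if_neg ?_
        rintro ⟨h1, h2, h3⟩
        exact hs ⟨h1, le_trans (le_of_lt h2) h3⟩
      simp only [hzero, MeasureTheory.integral_zero]
    rw [e1, e2]
  rw [hLHS, hRHS, hswap]



lemma refl_intOn' {G : ℝ → ℝ} {u t : ℝ} (hu0 : 0 ≤ u) (hut : u ≤ t)
    (hG : IntegrableOn G (Set.Ioc 0 t)) :
    IntegrableOn (fun s => G (u - s)) (Set.Ioc 0 u) := by
  have h1 : IntegrableOn G (Set.Ioc 0 u) := hG.mono_set (Set.Ioc_subset_Ioc_right hut)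
  have h2 : IntervalIntegrable G volume 0 u := by
    rw [intervalIntegrable_iff_integrableOn_Ioc_of_le hu0]; exact h1
  have h3 := (h2.comp_sub_left u).symm
  simp only [sub_zero, sub_self] at h3
  rw [intervalIntegrable_iff_integrableOn_Ioc_of_le hu0] at h3
  exact h3

lemma refl_integral' (G : ℝ → ℝ) {u : ℝ} (hu : 0 ≤ u) :
    ∫ s in Set.Ioc 0 u, G (u - s) = ∫ s in Set.Ioc 0 u, G s := by
  rw [← intervalIntegral.integral_of_le hu, ← intervalIntegral.integral_of_le hu]
  simpa using intervalIntegral.integral_comp_sub_left G u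

/-- a bounded measurable function is integrable on a bounded interval -/
lemma bdd_integrableOn {f : ℝ → ℝ} {a b M : ℝ} (hm : Measurable f)
    (hb : ∀ s ∈ Set.Ioc a b, |f s| ≤ M) : IntegrableOn f (Set.Ioc a b) := by
  haveI : IsFiniteMeasure (volume.restrict (Set.Ioc a b)) :=
    ⟨by rw [Measure.restrict_apply_univ]; exact measure_Ioc_lt_top⟩
  refine ⟨hm.aestronglyMeasurable.restrict, ?_⟩
  refine MeasureTheory.HasFiniteIntegral.of_bounded (C := M) ?_
  rw [ae_restrict_iff' measurableSet_Ioc]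
  filter_upwards with s hs
  exact hb s hs

/-- kernel times bounded function is integrable -/
lemma kern_mul_integrableOn {f h : ℝ → ℝ} {t M : ℝ} (ht : 0 ≤ t)
    (hf : IntegrableOn f (Set.Ioc 0 t))
    (hhm : AEStronglyMeasurable h (volume.restrict (Set.Ioc 0 t)))
    (hh : ∀ s ∈ Set.Ioc (0:ℝ) t, |h s| ≤ M) :
    IntegrableOn (fun s => f (t - s) * h s) (Set.Ioc 0 t) := by
  have h1 : IntegrableOn (fun s => f (t - s)) (Set.Ioc 0 t) := refl_intOn' ht le_rfl hf
  have hb : ∀ᵐ s ∂(volume.restrict (Set.Ioc (0:ℝ) t)), ‖h s‖ ≤ M := by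
    rw [ae_restrict_iff' measurableSet_Ioc]
    filter_upwards with s hs
    exact hh s hs
  have h2 : Integrable (fun s => h s * f (t - s)) (volume.restrict (Set.Ioc 0 t)) :=
    h1.bdd_mul hhm hb
  exact h2.congr (Filter.Eventually.of_forall fun s => mul_comm _ _)

/-- measurability of the convolution -/
lemma conv_measurable {f g : ℝ → ℝ} (hf : Measurable f) (hg : Measurable g) :
    Measurable (fun w => ∫ v in Set.Ioc (0:ℝ) w, f (w - v) * g v) := by
  have heq : (fun w => ∫ v in Set.Ioc (0:ℝ) w, f (w - v) * g v)
      = fun w => ∫ v, (fun p : ℝ × ℝ =>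
          if 0 < p.2 ∧ p.2 ≤ p.1 then f (p.1 - p.2) * g p.2 else 0) (w, v) := by
    funext w
    rw [← MeasureTheory.integral_indicator measurableSet_Ioc]
    congr 1
    funext v
    by_cases hv : v ∈ Set.Ioc (0:ℝ) w
    · rw [Set.indicator_of_mem hv]
      exact (if_pos ⟨hv.1, hv.2⟩).symm
    · rw [Set.indicator_of_notMem hv]
      exact (if_neg (by rintro ⟨h1, h2⟩; exact hv ⟨h1, h2⟩)).symm
  rw [heq]
  have hmeas : Measurable (fun p : ℝ × ℝ =>
      if 0 < p.2 ∧ p.2 ≤ p.1 then f (p.1 - p.2) * g p.2 else 0) := by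
    refine Measurable.ite ?_ ?_ measurable_const
    · exact (measurableSet_lt measurable_const measurable_snd).inter
        (measurableSet_le measurable_snd measurable_fst)
    · exact (hf.comp (measurable_fst.sub measurable_snd)).mul (hg.comp measurable_snd)
  exact (hmeas.stronglyMeasurable.integral_prod_right').measurable

/-- a bound for convolution integrals -/
lemma conv_bound {f h : ℝ → ℝ} {T M : ℝ} (hfm : Measurable f)
    (hf : IntegrableOn f (Set.Ioc 0 T))
    (hhm : Measurable h) (hh : ∀ v ∈ Set.Ioc (0:ℝ) T, |h v| ≤ M) (hM : 0 ≤ M)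
    {s : ℝ} (hs0 : 0 ≤ s) (hsT : s ≤ T) :
    |∫ v in Set.Ioc (0:ℝ) s, f (s - v) * h v| ≤ M * ∫ v in Set.Ioc (0:ℝ) T, |f v| := by
  have hh' : ∀ v ∈ Set.Ioc (0:ℝ) s, |h v| ≤ M := fun v hv =>
    hh v ⟨hv.1, le_trans hv.2 hsT⟩
  have hint : IntegrableOn (fun v => f (s - v) * h v) (Set.Ioc 0 s) :=
    kern_mul_integrableOn hs0 (hf.mono_set (Set.Ioc_subset_Ioc_right hsT))
      hhm.aestronglyMeasurable.restrict hh'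
  have h1 : |∫ v in Set.Ioc (0:ℝ) s, f (s - v) * h v|
      ≤ ∫ v in Set.Ioc (0:ℝ) s, |f (s - v) * h v| := by
    rw [← Real.norm_eq_abs]
    refine le_trans (norm_integral_le_integral_norm _) (le_of_eq ?_)
    exact setIntegral_congr_fun measurableSet_Ioc (fun v _ => Real.norm_eq_abs _)
  have h2 : ∫ v in Set.Ioc (0:ℝ) s, |f (s - v) * h v|
      ≤ ∫ v in Set.Ioc (0:ℝ) s, M * |f (s - v)| := by
    refine setIntegral_mono_on hint.abs ?_ measurableSet_Ioc ?_
    · exact ((refl_intOn' hs0 hsT hf).norm.const_mul M).congr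
        (Filter.Eventually.of_forall fun v => rfl)
    · intro v hv
      rw [abs_mul]
      calc |f (s-v)| * |h v| ≤ |f (s-v)| * M :=
            mul_le_mul_of_nonneg_left (hh' v hv) (abs_nonneg _)
        _ = M * |f (s-v)| := mul_comm _ _
  have h3 : ∫ v in Set.Ioc (0:ℝ) s, M * |f (s - v)| = M * ∫ v in Set.Ioc (0:ℝ) s, |f (s - v)| :=
    MeasureTheory.integral_const_mul M _
  have h4 : ∫ v in Set.Ioc (0:ℝ) s, |f (s - v)| = ∫ v in Set.Ioc (0:ℝ) s, |f v| :=
    refl_integral' (fun w => |f w|) hs0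
  have h5 : ∫ v in Set.Ioc (0:ℝ) s, |f v| ≤ ∫ v in Set.Ioc (0:ℝ) T, |f v| := by
    refine setIntegral_mono_set hf.norm ?_ ?_
    · filter_upwards with v using abs_nonneg _
    · exact HasSubset.Subset.eventuallyLE (Set.Ioc_subset_Ioc_right hsT)
  calc |∫ v in Set.Ioc (0:ℝ) s, f (s - v) * h v|
      ≤ ∫ v in Set.Ioc (0:ℝ) s, M * |f (s - v)| := le_trans h1 h2
    _ = M * ∫ v in Set.Ioc (0:ℝ) s, |f v| := by rw [h3, h4]
    _ ≤ M * ∫ v in Set.Ioc (0:ℝ) T, |f v| := mul_le_mul_of_nonneg_left h5 hM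

/-- the convolution of two integrable functions is integrable -/
lemma conv_integrableOn {f g : ℝ → ℝ} (hfm : Measurable f) (hgm : Measurable g) {T : ℝ}
    (hT : 0 ≤ T) (hf : IntegrableOn f (Set.Ioc 0 T)) (hg : IntegrableOn g (Set.Ioc 0 T)) :
    IntegrableOn (fun w => ∫ v in Set.Ioc (0:ℝ) w, f (w - v) * g v) (Set.Ioc 0 T) := by
  classical
  set Ψ : ℝ × ℝ → ℝ := fun p =>
    if 0 < p.2 ∧ p.2 < p.1 ∧ p.1 ≤ T then f (p.1 - p.2) * g p.2 else 0 with hΨ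
  have hΨm : Measurable Ψ := by
    refine Measurable.ite ?_ ?_ measurable_const
    · refine (measurableSet_lt measurable_const measurable_snd).inter
        ((measurableSet_lt measurable_snd measurable_fst).inter
          (measurableSet_le measurable_fst measurable_const))
    · exact (hfm.comp (measurable_fst.sub measurable_snd)).mul (hgm.comp measurable_snd)
  have hΨint : Integrable Ψ (volume.prod volume) := by
    rw [MeasureTheory.integrable_prod_iff' hΨm.aestronglyMeasurable]
    constructor
    · refine Filter.Eventually.of_forall (fun v => ?_)
      by_cases hv : 0 < v ∧ v ≤ T
      · have hind : (fun w => Ψ (w, v))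
            = (Set.Ioc v T).indicator (fun w => f (w - v) * g v) := by
          funext w
          by_cases hw : w ∈ Set.Ioc v T
          · rw [Set.indicator_of_mem hw, hΨ]; exact if_pos ⟨hv.1, hw.1, hw.2⟩
          · rw [Set.indicator_of_notMem hw, hΨ]
            exact if_neg (by rintro ⟨_, h2, h3⟩; exact hw ⟨h2, h3⟩)
        rw [hind, integrable_indicator_iff measurableSet_Ioc]
        have h1 : IntervalIntegrable f volume 0 (T - v) := by
          rw [intervalIntegrable_iff_integrableOn_Ioc_of_le (by linarith)]
          exact hf.mono_set (Set.Ioc_subset_Ioc_right (by linarith))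
        have h2 := h1.comp_sub_right v
        simp only [zero_add] at h2
        rw [show T - v + v = T by ring] at h2
        rw [intervalIntegrable_iff_integrableOn_Ioc_of_le hv.2] at h2
        exact h2.mul_const (g v)
      · have : (fun w => Ψ (w, v)) = fun _ => 0 := by
          funext w; rw [hΨ]
          refine if_neg ?_
          rintro ⟨h1, h2, h3⟩
          exact hv ⟨h1, le_trans (le_of_lt h2) h3⟩
        rw [this]; exact integrable_zero _ _ _
    · -- integral of norms in w, as a function of v
      set Cf : ℝ := ∫ w in Set.Ioc (0:ℝ) T, |f w| with hCf
      have hCf0 : 0 ≤ Cf := setIntegral_nonneg measurableSet_Ioc (fun w _ => abs_nonneg _)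
      set bound : ℝ → ℝ := (Set.Ioc (0:ℝ) T).indicator (fun v => |g v| * Cf) with hbound
      have hboundint : Integrable bound volume := by
        rw [hbound, integrable_indicator_iff measurableSet_Ioc]
        exact hg.norm.mul_const Cf
      refine Integrable.mono' hboundint ?_ ?_
      · exact (hΨm.norm.stronglyMeasurable.integral_prod_left').aestronglyMeasurable
      refine Filter.Eventually.of_forall (fun v => ?_)
      by_cases hv : 0 < v ∧ v ≤ T
      · have hval : bound v = |g v| * Cf := by
          rw [hbound, Set.indicator_of_mem (Set.mem_Ioc.2 hv)]
        rw [hval]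
        have hnn : 0 ≤ ∫ w, ‖Ψ (w, v)‖ := integral_nonneg (fun w => norm_nonneg _)
        rw [Real.norm_eq_abs, abs_of_nonneg hnn]
        have hΨval : ∀ w, Ψ (w, v)
            = (Set.Ioc v T).indicator (fun w => f (w - v) * g v) w := by
          intro w
          by_cases hw : w ∈ Set.Ioc v T
          · rw [Set.indicator_of_mem hw, hΨ]; exact if_pos ⟨hv.1, hw.1, hw.2⟩
          · rw [Set.indicator_of_notMem hw, hΨ]
            exact if_neg (by rintro ⟨_, h2, h3⟩; exact hw ⟨h2, h3⟩)
        have hind : (fun w => ‖Ψ (w, v)‖)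
            = (Set.Ioc v T).indicator (fun w => ‖f (w - v) * g v‖) := by
          funext w; rw [hΨval w, norm_indicator_eq_indicator_norm]
        rw [hind, MeasureTheory.integral_indicator measurableSet_Ioc]
        have e1 : ∫ w in Set.Ioc v T, ‖f (w - v) * g v‖
            = ∫ w in Set.Ioc v T, |f (w - v)| * |g v| := by
          refine setIntegral_congr_fun measurableSet_Ioc (fun w _ => ?_)
          rw [Real.norm_eq_abs, abs_mul]
        -- change of variables : ∫ w in Ioc v T, |f (w-v)| = ∫ w in Ioc 0 (T-v), |f w|
        have e2 : ∫ w in Set.Ioc v T, |f (w - v)| = ∫ w in Set.Ioc (0:ℝ) (T - v), |f w| := by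
          rw [← intervalIntegral.integral_of_le hv.2,
            ← intervalIntegral.integral_of_le (by linarith : (0:ℝ) ≤ T - v)]
          have := intervalIntegral.integral_comp_sub_right
            (a := v) (b := T) (fun w => |f w|) v
          simp only [sub_self] at this
          exact this
        have e3 : ∫ w in Set.Ioc (0:ℝ) (T - v), |f w| ≤ Cf := by
          rw [hCf]
          refine setIntegral_mono_set hf.norm ?_ ?_
          · filter_upwards with w using abs_nonneg _
          · exact HasSubset.Subset.eventuallyLE (Set.Ioc_subset_Ioc_right (by linarith))
        calc ∫ w in Set.Ioc v T, ‖f (w - v) * g v‖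
            = (∫ w in Set.Ioc v T, |f (w - v)|) * |g v| := by
              rw [e1, MeasureTheory.integral_mul_const]
          _ = (∫ w in Set.Ioc (0:ℝ) (T - v), |f w|) * |g v| := by rw [e2]
          _ ≤ Cf * |g v| := by
              exact mul_le_mul_of_nonneg_right e3 (abs_nonneg _)
          _ = |g v| * Cf := mul_comm _ _
      · have hzero : (fun w => Ψ (w, v)) = fun _ => 0 := by
          funext w; rw [hΨ]
          exact if_neg (by rintro ⟨h1, h2, h3⟩; exact hv ⟨h1, le_trans (le_of_lt h2) h3⟩)
        have hz2 : (∫ w, ‖Ψ (w, v)‖) = 0 := by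
          have heq : (fun w => ‖Ψ (w, v)‖) = fun _ => (0:ℝ) := by
            funext w
            rw [show Ψ (w, v) = 0 from congrFun hzero w]
            simp
          rw [heq]; simp
        rw [hz2]
        have : bound v = 0 := by
          rw [hbound, Set.indicator_of_notMem (by simpa [Set.mem_Ioc] using hv)]
        rw [this]; simp
  have hmain : Integrable (fun w => ∫ v, Ψ (w, v)) volume := hΨint.integral_prod_left
  refine (hmain.integrableOn).congr_fun (fun w hw => ?_) measurableSet_Ioc
  -- for w ∈ Ioc 0 T identify
  have hΨval : ∀ v, Ψ (w, v)
      = (Set.Ioo (0:ℝ) w).indicator (fun v => f (w - v) * g v) v := by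
    intro v
    by_cases hv : v ∈ Set.Ioo (0:ℝ) w
    · rw [Set.indicator_of_mem hv, hΨ]; exact if_pos ⟨hv.1, hv.2, hw.2⟩
    · rw [Set.indicator_of_notMem hv, hΨ]
      exact if_neg (by rintro ⟨h1, h2, _⟩; exact hv ⟨h1, h2⟩)
  calc (∫ v, Ψ (w, v))
      = ∫ v in Set.Ioo (0:ℝ) w, f (w - v) * g v := by
        rw [← MeasureTheory.integral_indicator measurableSet_Ioo]
        congr 1; funext v; exact hΨval v
    _ = ∫ v in Set.Ioc (0:ℝ) w, f (w - v) * g v := MeasureTheory.integral_Ioc_eq_integral_Ioo.symm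


end WHaux

/-- Solution of the Wiener–Hopf equation via the resolvent: if
`x = g - λ K * x` then `x = g + R_λ' * g`. -/
theorem wiener_hopf_solution (K Rl R' g x : ℝ → ℝ) (lam : ℝ)
    (hg : ∀ T : ℝ, 0 < T → ∃ M : ℝ, ∀ t ∈ Set.Icc (0:ℝ) T, |g t| ≤ M)
    (hx : ∀ T : ℝ, 0 < T → ∃ M : ℝ, ∀ t ∈ Set.Icc (0:ℝ) T, |x t| ≤ M)
    (hgm : Measurable g) (hxm : Measurable x)
    (hKloc : MeasureTheory.LocallyIntegrableOn K (Set.Ici (0:ℝ)))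
    (hR'loc : MeasureTheory.LocallyIntegrableOn R' (Set.Ici (0:ℝ)))
    (hderiv : ∀ t : ℝ, HasDerivAt Rl (R' t) t)
    (hR0 : Rl 0 = 1)
    (hres : ∀ t : ℝ, 0 ≤ t → Rl t + lam * ∫ s in (0:ℝ)..t, K (t - s) * Rl s = 1)
    (hWH : ∀ t : ℝ, 0 ≤ t → x t = g t - lam * ∫ s in (0:ℝ)..t, K (t - s) * x s) :
    ∀ t : ℝ, 0 ≤ t → x t = g t + ∫ s in (0:ℝ)..t, R' (t - s) * g s := by
  classical
  -- a measurable version of K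
  have hKsm := hKloc.aestronglyMeasurable
  set K' : ℝ → ℝ := hKsm.mk K with hK'def
  have hK'm : Measurable K' := hKsm.stronglyMeasurable_mk.measurable
  have hKae : K =ᵐ[volume.restrict (Set.Ioi (0:ℝ))] K' :=
    ae_restrict_of_ae_restrict_of_subset Set.Ioi_subset_Ici_self hKsm.ae_eq_mk
  -- basic measurability/continuity facts
  have hR'm : Measurable R' := by
    have h : R' = deriv Rl := funext fun u => ((hderiv u).deriv).symm
    rw [h]; exact measurable_deriv Rl
  have hRlc : Continuous Rl := by
    rw [continuous_iff_continuousAt]; exact fun u => (hderiv u).continuousAt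
  have hRlm : Measurable Rl := hRlc.measurable
  -- integrability on Ioc
  have hKint : ∀ c : ℝ, 0 ≤ c → IntegrableOn K' (Set.Ioc 0 c) := by
    intro c _
    have h1 : IntegrableOn K (Set.Icc 0 c) :=
      hKloc.integrableOn_compact_subset (fun z hz => hz.1) isCompact_Icc
    have h2 : IntegrableOn K (Set.Ioc 0 c) := h1.mono_set Set.Ioc_subset_Icc_self
    exact h2.congr_fun_ae
      (ae_restrict_of_ae_restrict_of_subset Set.Ioc_subset_Ioi_self hKae)
  have hR'int : ∀ c : ℝ, 0 ≤ c → IntegrableOn R' (Set.Ioc 0 c) := fun c _ =>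
    (hR'loc.integrableOn_compact_subset (fun z hz => hz.1) isCompact_Icc).mono_set
      Set.Ioc_subset_Icc_self
  -- bounds on Ioc 0 c
  have hgbd : ∀ c : ℝ, 0 ≤ c → ∃ M : ℝ, 0 ≤ M ∧ ∀ s ∈ Set.Ioc (0:ℝ) c, |g s| ≤ M := by
    intro c hc
    obtain ⟨M, hM⟩ := hg (c+1) (by linarith)
    refine ⟨max M 0, le_max_right _ _, fun s hs => ?_⟩
    exact le_trans (hM s ⟨le_of_lt hs.1, by linarith [hs.2]⟩) (le_max_left _ _)
  have hxbd : ∀ c : ℝ, 0 ≤ c → ∃ M : ℝ, 0 ≤ M ∧ ∀ s ∈ Set.Ioc (0:ℝ) c, |x s| ≤ M := by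
    intro c hc
    obtain ⟨M, hM⟩ := hx (c+1) (by linarith)
    refine ⟨max M 0, le_max_right _ _, fun s hs => ?_⟩
    exact le_trans (hM s ⟨le_of_lt hs.1, by linarith [hs.2]⟩) (le_max_left _ _)
  have hRlbd : ∀ c : ℝ, 0 ≤ c → ∃ M : ℝ, 0 ≤ M ∧ ∀ z ∈ Set.Icc (0:ℝ) c, |Rl z| ≤ M := by
    intro c _
    obtain ⟨M, hM⟩ := (isCompact_Icc (a := (0:ℝ)) (b := c)).exists_bound_of_continuousOn
      hRlc.continuousOn
    refine ⟨max M 0, le_max_right _ _, fun z hz => ?_⟩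
    exact le_trans (by simpa [Real.norm_eq_abs] using hM z hz) (le_max_left _ _)
  -- swap K for K' in convolution integrals
  have hKswap : ∀ (f : ℝ → ℝ) (c : ℝ), 0 ≤ c →
      ∫ s in Set.Ioc (0:ℝ) c, K (c - s) * f s = ∫ s in Set.Ioc (0:ℝ) c, K' (c - s) * f s := by
    intro f c _
    refine integral_congr_ae ?_
    filter_upwards [WHaux.ae_reflect (p := fun w => K w = K' w) c hKae] with s hs
    rw [hs]
  -- fundamental theorem of calculus for Rl
  have hFTC : ∀ c : ℝ, 0 ≤ c → ∫ v in Set.Ioc (0:ℝ) c, R' v = Rl c - 1 := by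
    intro c hc
    have hii : IntervalIntegrable R' volume 0 c := by
      rw [intervalIntegrable_iff_integrableOn_Ioc_of_le hc]; exact hR'int c hc
    have h := intervalIntegral.integral_eq_sub_of_hasDerivAt (f := Rl)
      (fun u _ => hderiv u) hii
    rw [intervalIntegral.integral_of_le hc, hR0] at h
    exact h
  -- resolvent equation with K'
  have hres' : ∀ c : ℝ, 0 ≤ c →
      lam * ∫ s in Set.Ioc (0:ℝ) c, K' (c - s) * Rl s = 1 - Rl c := by
    intro c hc
    have h0 := hres c hc
    rw [intervalIntegral.integral_of_le hc, hKswap Rl c hc] at h0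
    linarith
  -- the auxiliary kernel ψ = R' ⋆ K'
  set ψ : ℝ → ℝ := fun w => ∫ v in Set.Ioc (0:ℝ) w, R' (w - v) * K' v with hψdef
  have hψm : Measurable ψ := WHaux.conv_measurable hR'm hK'm
  have hψint : ∀ c : ℝ, 0 ≤ c → IntegrableOn ψ (Set.Ioc 0 c) := fun c hc =>
    WHaux.conv_integrableOn hR'm hK'm hc (hR'int c hc) (hKint c hc)
  -- φ := lam*K' + lam*ψ + R' has vanishing integrals, hence is a.e. zero
  set φf : ℝ → ℝ := fun w => lam * K' w + lam * ψ w + R' w with hφdef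
  have hφm : Measurable φf := ((hK'm.const_mul lam).add (hψm.const_mul lam)).add hR'm
  have hφint : ∀ c : ℝ, 0 < c → IntegrableOn φf (Set.Ioc 0 c) := fun c hc =>
    (((hKint c hc.le).const_mul lam).add ((hψint c hc.le).const_mul lam)).add (hR'int c hc.le)
  have hφz : ∀ c : ℝ, 0 ≤ c → ∫ w in Set.Ioc (0:ℝ) c, φf w = 0 := by
    intro c hc
    have key := WHaux.fub c hc K' R' (fun _ => (1:ℝ)) hK'm hR'm measurable_const
      (hKint c hc) (hR'int c hc) 1 (fun s _ => by norm_num)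
    simp only [mul_one] at key
    have e1 : ∫ u in Set.Ioc (0:ℝ) c, K' (c-u) * ∫ s in Set.Ioc (0:ℝ) u, R' (u-s)
        = ∫ u in Set.Ioc (0:ℝ) c, K' (c-u) * (Rl u - 1) := by
      refine setIntegral_congr_fun measurableSet_Ioc (fun u hu => ?_)
      have h1 : ∫ s in Set.Ioc (0:ℝ) u, R' (u-s) = Rl u - 1 := by
        rw [WHaux.refl_integral' R' (le_of_lt hu.1)]
        exact hFTC u (le_of_lt hu.1)
      rw [h1]
    have e2 : ∫ s in Set.Ioc (0:ℝ) c, (∫ v in Set.Ioc (0:ℝ) (c-s), R' ((c-s)-v) * K' v)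
        = ∫ s in Set.Ioc (0:ℝ) c, ψ (c-s) := by simp only [hψdef]
    have e3 : ∫ s in Set.Ioc (0:ℝ) c, ψ (c-s) = ∫ w in Set.Ioc (0:ℝ) c, ψ w :=
      WHaux.refl_integral' ψ hc
    obtain ⟨MR, hMR0, hMR⟩ := hRlbd c hc
    have hint1 : IntegrableOn (fun u => K' (c-u) * Rl u) (Set.Ioc 0 c) :=
      WHaux.kern_mul_integrableOn hc (hKint c hc) hRlm.aestronglyMeasurable.restrict
        (fun s hs => hMR s ⟨le_of_lt hs.1, hs.2⟩)
    have hint2 : IntegrableOn (fun u => K' (c-u)) (Set.Ioc 0 c) :=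
      WHaux.refl_intOn' hc le_rfl (hKint c hc)
    have e4 : ∫ u in Set.Ioc (0:ℝ) c, K' (c-u) * (Rl u - 1)
        = (∫ u in Set.Ioc (0:ℝ) c, K' (c-u) * Rl u) - ∫ u in Set.Ioc (0:ℝ) c, K' (c-u) := by
      rw [← integral_sub hint1 hint2]
      refine setIntegral_congr_fun measurableSet_Ioc (fun u _ => ?_)
      ring
    have e5 : ∫ u in Set.Ioc (0:ℝ) c, K' (c-u) = ∫ u in Set.Ioc (0:ℝ) c, K' u :=
      WHaux.refl_integral' K' hc
    have esplit : ∫ w in Set.Ioc (0:ℝ) c, φf w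
        = lam * (∫ w in Set.Ioc (0:ℝ) c, K' w) + lam * (∫ w in Set.Ioc (0:ℝ) c, ψ w)
          + ∫ w in Set.Ioc (0:ℝ) c, R' w := by
      have i1 : IntegrableOn (fun w => lam * K' w) (Set.Ioc 0 c) := (hKint c hc).const_mul lam
      have i2 : IntegrableOn (fun w => lam * ψ w) (Set.Ioc 0 c) := (hψint c hc).const_mul lam
      have i3 : IntegrableOn R' (Set.Ioc 0 c) := hR'int c hc
      calc ∫ w in Set.Ioc (0:ℝ) c, φf w
          = ∫ w in Set.Ioc (0:ℝ) c, ((lam * K' w + lam * ψ w) + R' w) := rfl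
        _ = (∫ w in Set.Ioc (0:ℝ) c, (lam * K' w + lam * ψ w))
            + ∫ w in Set.Ioc (0:ℝ) c, R' w := integral_add (i1.add i2) i3
        _ = ((∫ w in Set.Ioc (0:ℝ) c, lam * K' w) + ∫ w in Set.Ioc (0:ℝ) c, lam * ψ w)
            + ∫ w in Set.Ioc (0:ℝ) c, R' w := by rw [integral_add i1 i2]
        _ = (lam * (∫ w in Set.Ioc (0:ℝ) c, K' w) + lam * (∫ w in Set.Ioc (0:ℝ) c, ψ w))
            + ∫ w in Set.Ioc (0:ℝ) c, R' w := by
              rw [MeasureTheory.integral_const_mul, MeasureTheory.integral_const_mul]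
        _ = lam * (∫ w in Set.Ioc (0:ℝ) c, K' w) + lam * (∫ w in Set.Ioc (0:ℝ) c, ψ w)
            + ∫ w in Set.Ioc (0:ℝ) c, R' w := by ring
    -- combine everything
    have hkey2 : (∫ u in Set.Ioc (0:ℝ) c, K' (c-u) * Rl u) - (∫ u in Set.Ioc (0:ℝ) c, K' u)
        = ∫ w in Set.Ioc (0:ℝ) c, ψ w := by
      rw [← e5, ← e4, ← e1, key, e2, e3]
    have hB := hres' c hc
    have hr := hFTC c hc
    rw [esplit]
    have hψeq : lam * (∫ w in Set.Ioc (0:ℝ) c, ψ w)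
        = lam * (∫ u in Set.Ioc (0:ℝ) c, K' (c-u) * Rl u) - lam * ∫ u in Set.Ioc (0:ℝ) c, K' u := by
      rw [← hkey2]; ring
    rw [hψeq, hr]
    linarith [hB]
  have hφae := WHaux.ae_zero_of_int hφm hφint hφz
  -- the candidate solution y
  set y : ℝ → ℝ := fun s => g s + ∫ v in Set.Ioc (0:ℝ) s, R' (s - v) * g v with hydef
  have hym : Measurable y := hgm.add (WHaux.conv_measurable hR'm hgm)
  have hybd : ∀ c : ℝ, 0 ≤ c → ∃ M : ℝ, 0 ≤ M ∧ ∀ s ∈ Set.Ioc (0:ℝ) c, |y s| ≤ M := by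
    intro c hc
    obtain ⟨Mg, hMg0, hMg⟩ := hgbd c hc
    have hnn : 0 ≤ ∫ v in Set.Ioc (0:ℝ) c, |R' v| :=
      setIntegral_nonneg measurableSet_Ioc (fun v _ => abs_nonneg _)
    refine ⟨Mg + Mg * ∫ v in Set.Ioc (0:ℝ) c, |R' v|, by positivity, fun s hs => ?_⟩
    have h1 := WHaux.conv_bound (f := R') (h := g) hR'm (hR'int c hc) hgm hMg hMg0
      (le_of_lt hs.1) hs.2
    calc |y s| ≤ |g s| + |∫ v in Set.Ioc (0:ℝ) s, R' (s-v) * g v| := abs_add_le _ _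
      _ ≤ Mg + Mg * ∫ v in Set.Ioc (0:ℝ) c, |R' v| := add_le_add (hMg s hs) h1
  -- y solves the WH equation with kernel K'
  have hyWH : ∀ c : ℝ, 0 ≤ c →
      y c = g c - lam * ∫ s in Set.Ioc (0:ℝ) c, K' (c-s) * y s := by
    intro c hc
    obtain ⟨Mg, hMg0, hMg⟩ := hgbd c hc
    have hconvbd : ∀ s ∈ Set.Ioc (0:ℝ) c,
        |∫ v in Set.Ioc (0:ℝ) s, R' (s-v) * g v| ≤ Mg * ∫ v in Set.Ioc (0:ℝ) c, |R' v| :=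
      fun s hs => WHaux.conv_bound hR'm (hR'int c hc) hgm hMg hMg0 (le_of_lt hs.1) hs.2
    have hiKg : IntegrableOn (fun s => K' (c-s) * g s) (Set.Ioc 0 c) :=
      WHaux.kern_mul_integrableOn hc (hKint c hc) hgm.aestronglyMeasurable.restrict hMg
    have hiKconv : IntegrableOn
        (fun s => K' (c-s) * ∫ v in Set.Ioc (0:ℝ) s, R' (s-v) * g v) (Set.Ioc 0 c) :=
      WHaux.kern_mul_integrableOn hc (hKint c hc)
        ((WHaux.conv_measurable hR'm hgm).aestronglyMeasurable.restrict) hconvbd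
    have hsplit : ∫ s in Set.Ioc (0:ℝ) c, K' (c-s) * y s
        = (∫ s in Set.Ioc (0:ℝ) c, K' (c-s) * g s)
          + ∫ s in Set.Ioc (0:ℝ) c, K' (c-s) * ∫ v in Set.Ioc (0:ℝ) s, R' (s-v) * g v := by
      rw [← integral_add hiKg hiKconv]
      refine setIntegral_congr_fun measurableSet_Ioc (fun s _ => ?_)
      simp only [hydef]
      ring
    have key := WHaux.fub c hc K' R' g hK'm hR'm hgm (hKint c hc) (hR'int c hc) Mg hMg
    have hphi0 : ∀ᵐ s ∂(volume.restrict (Set.Ioc (0:ℝ) c)), φf (c-s) = 0 :=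
      WHaux.ae_reflect c hφae
    have hiR : IntegrableOn (fun s => R' (c-s) * g s) (Set.Ioc 0 c) :=
      WHaux.kern_mul_integrableOn hc (hR'int c hc) hgm.aestronglyMeasurable.restrict hMg
    have hiψ : IntegrableOn (fun s => ψ (c-s) * g s) (Set.Ioc 0 c) :=
      WHaux.kern_mul_integrableOn hc (hψint c hc) hgm.aestronglyMeasurable.restrict hMg
    have hzero : (∫ s in Set.Ioc (0:ℝ) c, R' (c-s) * g s)
        + (lam * (∫ s in Set.Ioc (0:ℝ) c, K' (c-s) * g s)
          + lam * (∫ s in Set.Ioc (0:ℝ) c, ψ (c-s) * g s)) = 0 := by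
      have hz : ∫ s in Set.Ioc (0:ℝ) c,
          (R' (c-s) * g s + (lam * (K' (c-s) * g s) + lam * (ψ (c-s) * g s))) = 0 := by
        have hae : (fun s => R' (c-s) * g s + (lam * (K' (c-s) * g s) + lam * (ψ (c-s) * g s)))
            =ᵐ[volume.restrict (Set.Ioc (0:ℝ) c)] (fun _ => (0:ℝ)) := by
          filter_upwards [hphi0] with s hs
          have hφval : lam * K' (c-s) + lam * ψ (c-s) + R' (c-s) = φf (c-s) := by
            rw [hφdef]
          have hzero' : lam * K' (c-s) + lam * ψ (c-s) + R' (c-s) = 0 := by rw [hφval, hs]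
          have : R' (c-s) * g s + (lam * (K' (c-s) * g s) + lam * (ψ (c-s) * g s))
              = (lam * K' (c-s) + lam * ψ (c-s) + R' (c-s)) * g s := by ring
          rw [this, hzero', zero_mul]
        rw [integral_congr_ae hae, integral_zero]
      have hz2 : ∫ s in Set.Ioc (0:ℝ) c,
          (R' (c-s) * g s + (lam * (K' (c-s) * g s) + lam * (ψ (c-s) * g s)))
          = (∫ s in Set.Ioc (0:ℝ) c, R' (c-s) * g s)
            + (lam * (∫ s in Set.Ioc (0:ℝ) c, K' (c-s) * g s)
              + lam * (∫ s in Set.Ioc (0:ℝ) c, ψ (c-s) * g s)) := by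
        calc ∫ s in Set.Ioc (0:ℝ) c,
            (R' (c-s) * g s + (lam * (K' (c-s) * g s) + lam * (ψ (c-s) * g s)))
            = (∫ s in Set.Ioc (0:ℝ) c, R' (c-s) * g s)
              + ∫ s in Set.Ioc (0:ℝ) c, (lam * (K' (c-s) * g s) + lam * (ψ (c-s) * g s)) :=
              integral_add hiR ((hiKg.const_mul lam).add (hiψ.const_mul lam))
          _ = (∫ s in Set.Ioc (0:ℝ) c, R' (c-s) * g s)
              + ((∫ s in Set.Ioc (0:ℝ) c, lam * (K' (c-s) * g s))
                + ∫ s in Set.Ioc (0:ℝ) c, lam * (ψ (c-s) * g s)) := by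
              rw [integral_add (hiKg.const_mul lam) (hiψ.const_mul lam)]
          _ = (∫ s in Set.Ioc (0:ℝ) c, R' (c-s) * g s)
              + (lam * (∫ s in Set.Ioc (0:ℝ) c, K' (c-s) * g s)
                + lam * (∫ s in Set.Ioc (0:ℝ) c, ψ (c-s) * g s)) := by
              rw [MeasureTheory.integral_const_mul, MeasureTheory.integral_const_mul]
      rw [← hz2]
      exact hz
    -- put things together
    have e2 : ∫ s in Set.Ioc (0:ℝ) c, (∫ v in Set.Ioc (0:ℝ) (c-s), R' ((c-s)-v) * K' v) * g s
        = ∫ s in Set.Ioc (0:ℝ) c, ψ (c-s) * g s := by simp only [hψdef]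
    have hyc : y c = g c + ∫ v in Set.Ioc (0:ℝ) c, R' (c - v) * g v := congrFun hydef c
    rw [hsplit, key, e2, hyc]
    set a := ∫ v in Set.Ioc (0:ℝ) c, R' (c - v) * g v
    set b := ∫ s in Set.Ioc (0:ℝ) c, K' (c-s) * g s
    set p := ∫ s in Set.Ioc (0:ℝ) c, ψ (c-s) * g s
    have : lam * (b + p) = lam * b + lam * p := by ring
    linarith [hzero]
  -- the difference d = x - y
  set d : ℝ → ℝ := fun s => x s - y s with hddef
  have hdm : Measurable d := hxm.sub hym
  have hdbd : ∀ c : ℝ, 0 ≤ c → ∃ M : ℝ, 0 ≤ M ∧ ∀ s ∈ Set.Ioc (0:ℝ) c, |d s| ≤ M := by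
    intro c hc
    obtain ⟨Mx, hMx0, hMx⟩ := hxbd c hc
    obtain ⟨My, hMy0, hMy⟩ := hybd c hc
    refine ⟨Mx + My, by linarith, fun s hs => ?_⟩
    calc |d s| = |x s - y s| := by simp only [hddef]
      _ ≤ |x s| + |y s| := abs_sub _ _
      _ ≤ Mx + My := add_le_add (hMx s hs) (hMy s hs)
  have hdWH : ∀ c : ℝ, 0 ≤ c →
      d c = -lam * ∫ s in Set.Ioc (0:ℝ) c, K' (c-s) * d s := by
    intro c hc
    obtain ⟨Mx, hMx0, hMx⟩ := hxbd c hc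
    obtain ⟨My, hMy0, hMy⟩ := hybd c hc
    have hiKx : IntegrableOn (fun s => K' (c-s) * x s) (Set.Ioc 0 c) :=
      WHaux.kern_mul_integrableOn hc (hKint c hc) hxm.aestronglyMeasurable.restrict hMx
    have hiKy : IntegrableOn (fun s => K' (c-s) * y s) (Set.Ioc 0 c) :=
      WHaux.kern_mul_integrableOn hc (hKint c hc) hym.aestronglyMeasurable.restrict hMy
    have hsub : ∫ s in Set.Ioc (0:ℝ) c, K' (c-s) * d s
        = (∫ s in Set.Ioc (0:ℝ) c, K' (c-s) * x s)
          - ∫ s in Set.Ioc (0:ℝ) c, K' (c-s) * y s := by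
      rw [← integral_sub hiKx hiKy]
      refine setIntegral_congr_fun measurableSet_Ioc (fun s _ => ?_)
      simp only [hddef]
      ring
    have hx' := hWH c hc
    rw [intervalIntegral.integral_of_le hc, hKswap x c hc] at hx'
    have hy' := hyWH c hc
    simp only [hddef]
    rw [hsub, hx', hy']
    ring
  have hdint : ∀ c : ℝ, 0 < c → IntegrableOn d (Set.Ioc 0 c) := by
    intro c hc
    obtain ⟨Md, _, hMd⟩ := hdbd c hc.le
    exact WHaux.bdd_integrableOn hdm hMd
  have hdz : ∀ c : ℝ, 0 ≤ c → ∫ s in Set.Ioc (0:ℝ) c, d s = 0 := by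
    intro c hc
    rcases eq_or_lt_of_le hc with rfl | hcpos
    · simp
    obtain ⟨Md, hMd0, hMd⟩ := hdbd c hc
    obtain ⟨MR, hMR0, hMR⟩ := hRlbd c hc
    have key := WHaux.fub c hc Rl K' d hRlm hK'm hdm hRlc.integrableOn_Ioc (hKint c hc) Md hMd
    have hiRd : IntegrableOn (fun s => Rl (c-s) * d s) (Set.Ioc 0 c) := by
      refine WHaux.bdd_integrableOn ((hRlm.comp (measurable_const.sub measurable_id)).mul hdm)
        (M := MR * Md) (fun s hs => ?_)
      rw [abs_mul]
      have h1 : |Rl (c-s)| ≤ MR := hMR (c-s) ⟨by linarith [hs.2], by linarith [hs.1]⟩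
      exact mul_le_mul h1 (hMd s hs) (abs_nonneg _) hMR0
    have hdic : IntegrableOn d (Set.Ioc 0 c) := hdint c hcpos
    have hlhs : lam * (∫ u in Set.Ioc (0:ℝ) c,
          Rl (c-u) * ∫ s in Set.Ioc (0:ℝ) u, K' (u-s) * d s)
        = - ∫ u in Set.Ioc (0:ℝ) c, Rl (c-u) * d u := by
      rw [← MeasureTheory.integral_const_mul]
      rw [show -∫ u in Set.Ioc (0:ℝ) c, Rl (c-u) * d u
          = ∫ u in Set.Ioc (0:ℝ) c, -(Rl (c-u) * d u) from (integral_neg _).symm]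
      refine setIntegral_congr_fun measurableSet_Ioc (fun u hu => ?_)
      have hd := hdWH u (le_of_lt hu.1)
      have : lam * ∫ s in Set.Ioc (0:ℝ) u, K' (u-s) * d s = - d u := by linarith [hd]
      calc lam * (Rl (c-u) * ∫ s in Set.Ioc (0:ℝ) u, K' (u-s) * d s)
          = Rl (c-u) * (lam * ∫ s in Set.Ioc (0:ℝ) u, K' (u-s) * d s) := by ring
        _ = Rl (c-u) * (- d u) := by rw [this]
        _ = -(Rl (c-u) * d u) := by ring
    have hrhs : lam * (∫ s in Set.Ioc (0:ℝ) c,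
          (∫ v in Set.Ioc (0:ℝ) (c-s), K' ((c-s)-v) * Rl v) * d s)
        = (∫ s in Set.Ioc (0:ℝ) c, d s) - ∫ s in Set.Ioc (0:ℝ) c, Rl (c-s) * d s := by
      rw [← MeasureTheory.integral_const_mul]
      rw [← integral_sub hdic hiRd]
      refine setIntegral_congr_fun measurableSet_Ioc (fun s hs => ?_)
      have hrr := hres' (c-s) (by linarith [hs.2])
      calc lam * ((∫ v in Set.Ioc (0:ℝ) (c-s), K' ((c-s)-v) * Rl v) * d s)
          = (lam * ∫ v in Set.Ioc (0:ℝ) (c-s), K' ((c-s)-v) * Rl v) * d s := by ring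
        _ = (1 - Rl (c-s)) * d s := by rw [hrr]
        _ = d s - Rl (c-s) * d s := by ring
    have := key
    have hfin : -(∫ u in Set.Ioc (0:ℝ) c, Rl (c-u) * d u)
        = (∫ s in Set.Ioc (0:ℝ) c, d s) - ∫ s in Set.Ioc (0:ℝ) c, Rl (c-s) * d s := by
      rw [← hlhs, ← hrhs, key]
    linarith [hfin]
  have hdae := WHaux.ae_zero_of_int hdm hdint hdz
  -- conclusion
  intro t ht
  have hd_ae_t : ∀ᵐ s ∂(volume.restrict (Set.Ioc (0:ℝ) t)), d s = 0 :=
    ae_restrict_of_ae_restrict_of_subset Set.Ioc_subset_Ioi_self hdae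
  have hKd0 : ∫ s in Set.Ioc (0:ℝ) t, K' (t-s) * d s = 0 := by
    have hae : (fun s => K' (t-s) * d s)
        =ᵐ[volume.restrict (Set.Ioc (0:ℝ) t)] (fun _ => (0:ℝ)) := by
      filter_upwards [hd_ae_t] with s hs
      rw [hs, mul_zero]
    rw [integral_congr_ae hae, integral_zero]
  have hd0 : d t = 0 := by
    rw [hdWH t ht, hKd0, mul_zero]
  have hxy : x t = y t := by
    simp only [hddef] at hd0
    linarith
  have hyt : y t = g t + ∫ v in Set.Ioc (0:ℝ) t, R' (t - v) * g v := congrFun hydef t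
  rw [intervalIntegral.integral_of_le ht, hxy, hyt]
end

section
/- Let α ∈ (1, 3/2) and define a_k = 1/Γ(αk+1), b_k = 1/Γ(α(k+1)) for k ≥ 0. Then for every k ≥ 1, the Cauchy product (a*b)_k = Σ_{ℓ=0}^k a_ℓ b_{k−ℓ} satisfies (a*b)_k ≤ (2^{αk}/Γ(α(k+1))) · (1 + (k+1)(1 + log k)). -/
open Real Finset

private lemma gamma_midpoint_sq_le {x y : ℝ} (hx : 0 < x) (hy : 0 < y) :
    Real.Gamma ((x + y) / 2) ^ 2 ≤ Real.Gamma x * Real.Gamma y := by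
  have h := Real.convexOn_log_Gamma.2 (Set.mem_Ioi.2 hx) (Set.mem_Ioi.2 hy)
    (by norm_num : (0:ℝ) ≤ 1/2) (by norm_num : (0:ℝ) ≤ 1/2) (by norm_num)
  simp only [Function.comp_apply, smul_eq_mul] at h
  have hmid : (1:ℝ)/2 * x + 1/2 * y = (x + y)/2 := by ring
  rw [hmid] at h
  have hgx := Real.Gamma_pos_of_pos hx
  have hgy := Real.Gamma_pos_of_pos hy
  have hgm := Real.Gamma_pos_of_pos (show 0 < (x+y)/2 by linarith)
  have h2 : Real.log (Real.Gamma ((x+y)/2) ^ 2)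
      ≤ Real.log (Real.Gamma x * Real.Gamma y) := by
    rw [Real.log_pow, Real.log_mul hgx.ne' hgy.ne']
    push_cast
    linarith
  exact (Real.log_le_log_iff (by positivity) (by positivity)).1 h2

private lemma gamma_prod_lower {x y : ℝ} (hx : 0 < x) (hy : 0 < y) :
    Real.Gamma (x + y) * 2 ^ (1 - (x + y)) * Real.sqrt Real.pi
      ≤ Real.Gamma x * Real.Gamma y * Real.sqrt ((x + y) / 2) := by
  have htpos : 0 < (x + y) / 2 := by linarith
  set t := (x + y) / 2 with ht
  have hgt := Real.Gamma_pos_of_pos htpos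
  have hdup := Real.Gamma_mul_Gamma_add_half_of_pos htpos
  have h2t : 2 * t = x + y := by rw [ht]; ring
  rw [h2t] at hdup
  have hgautschi : Real.Gamma (t + 1/2) ≤ Real.sqrt t * Real.Gamma t := by
    have h := gamma_midpoint_sq_le htpos (show (0:ℝ) < t + 1 by linarith)
    have e : (t + (t+1)) / 2 = t + 1/2 := by ring
    rw [e, Real.Gamma_add_one htpos.ne'] at h
    have h' : Real.Gamma (t + 1/2) ^ 2 ≤ (Real.sqrt t * Real.Gamma t) ^ 2 := by
      rw [mul_pow, Real.sq_sqrt htpos.le]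
      nlinarith
    have hpos : 0 ≤ Real.sqrt t * Real.Gamma t := by positivity
    have hg12 := Real.Gamma_pos_of_pos (show (0:ℝ) < t + 1/2 by linarith)
    calc Real.Gamma (t + 1/2) = Real.sqrt (Real.Gamma (t + 1/2) ^ 2) :=
          (Real.sqrt_sq hg12.le).symm
      _ ≤ Real.sqrt ((Real.sqrt t * Real.Gamma t) ^ 2) := Real.sqrt_le_sqrt h'
      _ = Real.sqrt t * Real.Gamma t := Real.sqrt_sq hpos
  have hmid := gamma_midpoint_sq_le hx hy
  rw [← ht] at hmid
  calc Real.Gamma (x + y) * 2 ^ (1 - (x + y)) * Real.sqrt Real.pi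
      = Real.Gamma t * Real.Gamma (t + 1/2) := hdup.symm
    _ ≤ Real.Gamma t * (Real.sqrt t * Real.Gamma t) :=
        mul_le_mul_of_nonneg_left hgautschi hgt.le
    _ = Real.Gamma t ^ 2 * Real.sqrt t := by ring
    _ ≤ Real.Gamma x * Real.Gamma y * Real.sqrt t :=
        mul_le_mul_of_nonneg_right hmid (Real.sqrt_nonneg _)

private lemma term_bound (α : ℝ) (hα1 : 1 < α) (hα2 : α < 3/2) (k ℓ : ℕ)
    (hℓ1 : 1 ≤ ℓ) (hℓk : ℓ ≤ k) :
    (1 / Real.Gamma (α * ℓ + 1)) * (1 / Real.Gamma (α * ((k : ℝ) - ℓ + 1)))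
      ≤ ((k:ℝ) + 1) * 2 ^ (α * k) / Real.Gamma (α * ((k : ℝ) + 1)) * (1 / (ℓ:ℝ)) := by
  have hℓR : (1:ℝ) ≤ (ℓ:ℝ) := by exact_mod_cast hℓ1
  have hkℓ : (ℓ:ℝ) ≤ (k:ℝ) := by exact_mod_cast hℓk
  have hkR : (1:ℝ) ≤ (k:ℝ) := le_trans hℓR hkℓ
  have hα0 : 0 < α := by linarith
  have hx : 0 < α * ℓ := by nlinarith
  have hy : 0 < α * ((k:ℝ) - ℓ + 1) := by nlinarith
  have hxy : α * (ℓ:ℝ) + α * ((k:ℝ) - ℓ + 1) = α * ((k:ℝ) + 1) := by ring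
  have hS2 : 2 ≤ α * ((k:ℝ) + 1) := by nlinarith
  have hGS : 0 < Real.Gamma (α * ((k:ℝ) + 1)) := Real.Gamma_pos_of_pos (by linarith)
  have hGx : 0 < Real.Gamma (α * ℓ) := Real.Gamma_pos_of_pos hx
  have hGy : 0 < Real.Gamma (α * ((k:ℝ) - ℓ + 1)) := Real.Gamma_pos_of_pos hy
  have hcore := gamma_prod_lower hx hy
  rw [hxy] at hcore
  have h2pow : (0:ℝ) < 2 ^ (α * (k:ℝ)) := Real.rpow_pos_of_pos two_pos _
  have hsq : Real.sqrt ((α * ((k:ℝ)+1))/2)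
      ≤ α * ((k:ℝ)+1) * 2 ^ (α * (k:ℝ)) * 2 ^ (1 - α * ((k:ℝ)+1)) * Real.sqrt Real.pi := by
    have e1 : (2:ℝ) ^ (α * (k:ℝ)) * 2 ^ (1 - α * ((k:ℝ)+1)) = 2 ^ (1 - α) := by
      rw [← Real.rpow_add two_pos]; ring_nf
    have e2 : (1:ℝ)/2 ≤ 2 ^ (1 - α : ℝ) := by
      have h := Real.rpow_le_rpow_of_exponent_le one_le_two
        (show (-1:ℝ) ≤ 1 - α by linarith)
      rwa [Real.rpow_neg_one, inv_eq_one_div] at h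
    have e3 : (1:ℝ) ≤ Real.sqrt Real.pi := by
      rw [show (1:ℝ) = Real.sqrt 1 by simp]
      exact Real.sqrt_le_sqrt (by linarith [Real.pi_gt_three])
    have e4 : Real.sqrt ((α * ((k:ℝ)+1))/2) ≤ (α * ((k:ℝ)+1))/2 := by
      have h1 : (α * ((k:ℝ)+1))/2 ≤ ((α * ((k:ℝ)+1))/2) ^ 2 := by nlinarith
      calc Real.sqrt ((α * ((k:ℝ)+1))/2) ≤ Real.sqrt (((α * ((k:ℝ)+1))/2) ^ 2) :=
            Real.sqrt_le_sqrt h1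
        _ = (α * ((k:ℝ)+1))/2 := Real.sqrt_sq (by linarith)
    have e5 : (α * ((k:ℝ)+1))/2 ≤ α * ((k:ℝ)+1) * 2 ^ (1 - α : ℝ) * Real.sqrt Real.pi := by
      have f1 : α * ((k:ℝ)+1) * (1/2) ≤ α * ((k:ℝ)+1) * 2 ^ (1 - α : ℝ) :=
        mul_le_mul_of_nonneg_left e2 (by linarith)
      have f2 : α * ((k:ℝ)+1) * 2 ^ (1 - α : ℝ) * 1
          ≤ α * ((k:ℝ)+1) * 2 ^ (1 - α : ℝ) * Real.sqrt Real.pi :=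
        mul_le_mul_of_nonneg_left e3
          (by positivity)
      linarith
    calc Real.sqrt ((α * ((k:ℝ)+1))/2) ≤ (α * ((k:ℝ)+1))/2 := e4
      _ ≤ α * ((k:ℝ)+1) * 2 ^ (1 - α : ℝ) * Real.sqrt Real.pi := e5
      _ = α * ((k:ℝ)+1) * 2 ^ (α * (k:ℝ)) * 2 ^ (1 - α * ((k:ℝ)+1)) * Real.sqrt Real.pi := by
          rw [show α * ((k:ℝ)+1) * 2 ^ (α * (k:ℝ)) * 2 ^ (1 - α * ((k:ℝ)+1)) * Real.sqrt Real.pi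
              = α * ((k:ℝ)+1) * (2 ^ (α * (k:ℝ)) * 2 ^ (1 - α * ((k:ℝ)+1))) * Real.sqrt Real.pi
              from by ring, e1]
  have hsqrtpos : 0 < Real.sqrt ((α * ((k:ℝ)+1))/2) := Real.sqrt_pos.2 (by linarith)
  have key : Real.Gamma (α * ((k:ℝ)+1))
      ≤ α * ((k:ℝ)+1) * 2 ^ (α * (k:ℝ))
        * (Real.Gamma (α * ℓ) * Real.Gamma (α * ((k:ℝ) - ℓ + 1))) := by
    have h1 : Real.Gamma (α * ((k:ℝ)+1)) * Real.sqrt ((α * ((k:ℝ)+1))/2)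
        ≤ (α * ((k:ℝ)+1) * 2 ^ (α * (k:ℝ))
            * (Real.Gamma (α * ℓ) * Real.Gamma (α * ((k:ℝ) - ℓ + 1))))
              * Real.sqrt ((α * ((k:ℝ)+1))/2) := by
      calc Real.Gamma (α * ((k:ℝ)+1)) * Real.sqrt ((α * ((k:ℝ)+1))/2)
          ≤ Real.Gamma (α * ((k:ℝ)+1)) * (α * ((k:ℝ)+1) * 2 ^ (α * (k:ℝ))
              * 2 ^ (1 - α * ((k:ℝ)+1)) * Real.sqrt Real.pi) :=
            mul_le_mul_of_nonneg_left hsq hGS.le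
        _ = (α * ((k:ℝ)+1) * 2 ^ (α * (k:ℝ)))
            * (Real.Gamma (α * ((k:ℝ)+1)) * 2 ^ (1 - α * ((k:ℝ)+1)) * Real.sqrt Real.pi) := by
            ring
        _ ≤ (α * ((k:ℝ)+1) * 2 ^ (α * (k:ℝ)))
            * (Real.Gamma (α * ℓ) * Real.Gamma (α * ((k:ℝ) - ℓ + 1))
                * Real.sqrt ((α * ((k:ℝ)+1))/2)) :=
            mul_le_mul_of_nonneg_left hcore (by positivity)
        _ = (α * ((k:ℝ)+1) * 2 ^ (α * (k:ℝ))
            * (Real.Gamma (α * ℓ) * Real.Gamma (α * ((k:ℝ) - ℓ + 1))))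
              * Real.sqrt ((α * ((k:ℝ)+1))/2) := by ring
    exact le_of_mul_le_mul_right h1 hsqrtpos
  rw [Real.Gamma_add_one hx.ne']
  rw [div_mul_div_comm, div_mul_div_comm]
  rw [div_le_div_iff₀ (by positivity) (by positivity)]
  have hℓ0 : (0:ℝ) ≤ (ℓ:ℝ) := by linarith
  nlinarith [mul_le_mul_of_nonneg_right key hℓ0]

/-- For `α ∈ (1, 3/2)` and `a_k = 1/Γ(αk+1)`, `b_k = 1/Γ(α(k+1))`, the Cauchy
product satisfies `(a*b)_k ≤ (2^{αk}/Γ(α(k+1)))(1 + (k+1)(1 + log k))`. -/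
theorem cauchy_product_ab_bound (α : ℝ) (hα1 : 1 < α) (hα2 : α < 3 / 2)
    (k : ℕ) (hk : 1 ≤ k) :
    (∑ ℓ ∈ Finset.range (k + 1),
        (1 / Real.Gamma (α * ℓ + 1)) * (1 / Real.Gamma (α * ((k : ℝ) - ℓ + 1))))
      ≤ (2 ^ (α * k) / Real.Gamma (α * ((k : ℝ) + 1))) *
          (1 + ((k : ℝ) + 1) * (1 + Real.log k)) := by
  have hα0 : 0 < α := by linarith
  have hkR : (1:ℝ) ≤ (k:ℝ) := by exact_mod_cast hk
  have hGS : 0 < Real.Gamma (α * ((k:ℝ) + 1)) := Real.Gamma_pos_of_pos (by nlinarith)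
  have h2pow : (0:ℝ) < 2 ^ (α * (k:ℝ)) := Real.rpow_pos_of_pos two_pos _
  have h2pow1 : (1:ℝ) ≤ 2 ^ (α * (k:ℝ)) := by
    rw [show (1:ℝ) = (2:ℝ) ^ (0:ℝ) by rw [Real.rpow_zero]]
    exact Real.rpow_le_rpow_of_exponent_le one_le_two (by nlinarith)
  have hlogk : 0 ≤ Real.log k := Real.log_nonneg hkR
  rw [Finset.sum_range_succ']
  have hsum : (∑ i ∈ Finset.range k,
        (1 / Real.Gamma (α * (↑(i+1):ℝ) + 1)) * (1 / Real.Gamma (α * ((k:ℝ) - (↑(i+1):ℝ) + 1))))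
      ≤ ((k:ℝ)+1) * 2 ^ (α * (k:ℝ)) / Real.Gamma (α * ((k:ℝ)+1)) * (1 + Real.log k) := by
    calc (∑ i ∈ Finset.range k,
          (1 / Real.Gamma (α * (↑(i+1):ℝ) + 1)) * (1 / Real.Gamma (α * ((k:ℝ) - (↑(i+1):ℝ) + 1))))
        ≤ ∑ i ∈ Finset.range k,
            ((k:ℝ)+1) * 2 ^ (α * (k:ℝ)) / Real.Gamma (α * ((k:ℝ)+1)) * (1 / (↑(i+1):ℝ)) := by
          apply Finset.sum_le_sum
          intro i hi
          exact term_bound α hα1 hα2 k (i+1) (Nat.succ_le_succ (Nat.zero_le i))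
            (Nat.succ_le_of_lt (Finset.mem_range.1 hi))
      _ = ((k:ℝ)+1) * 2 ^ (α * (k:ℝ)) / Real.Gamma (α * ((k:ℝ)+1))
            * ∑ i ∈ Finset.range k, (1 / (↑(i+1):ℝ)) := by
          rw [← Finset.mul_sum]
      _ ≤ ((k:ℝ)+1) * 2 ^ (α * (k:ℝ)) / Real.Gamma (α * ((k:ℝ)+1)) * (1 + Real.log k) := by
          apply mul_le_mul_of_nonneg_left _ (by positivity)
          have he : (∑ i ∈ Finset.range k, (1 / (↑(i+1):ℝ))) = ((harmonic k : ℚ) : ℝ) := by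
            rw [harmonic]
            push_cast
            simp [one_div]
          rw [he]
          exact harmonic_le_one_add_log k
  have hzero : (1 / Real.Gamma (α * ((0:ℕ):ℝ) + 1)) * (1 / Real.Gamma (α * ((k:ℝ) - ((0:ℕ):ℝ) + 1)))
      ≤ 2 ^ (α * (k:ℝ)) / Real.Gamma (α * ((k:ℝ)+1)) := by
    simp only [Nat.cast_zero, mul_zero, zero_add, sub_zero, Real.Gamma_one]
    rw [div_one, one_mul]
    exact div_le_div_of_nonneg_right h2pow1 hGS.le
  calc (∑ i ∈ Finset.range k,
        (1 / Real.Gamma (α * (↑(i+1):ℝ) + 1)) * (1 / Real.Gamma (α * ((k:ℝ) - (↑(i+1):ℝ) + 1))))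
      + (1 / Real.Gamma (α * ((0:ℕ):ℝ) + 1)) * (1 / Real.Gamma (α * ((k:ℝ) - ((0:ℕ):ℝ) + 1)))
      ≤ ((k:ℝ)+1) * 2 ^ (α * (k:ℝ)) / Real.Gamma (α * ((k:ℝ)+1)) * (1 + Real.log k)
        + 2 ^ (α * (k:ℝ)) / Real.Gamma (α * ((k:ℝ)+1)) := add_le_add hsum hzero
    _ = (2 ^ (α * (k:ℝ)) / Real.Gamma (α * ((k:ℝ) + 1))) *
          (1 + ((k:ℝ) + 1) * (1 + Real.log k)) := by ring
end
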